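/- arXiv:1808.06656 — 13 statements merged into one kernel-verified Lean document; each statement's English description precedes it below -/
import Mathlib

section
/- Let c₁, c₂ ∈ ℤ² be primitive vectors with ω(c₁,c₂) = a, and let m, n be positive integers. Define Q : ℤ² → ℤ by Q(γ) = ω(T_{c₁}^m(T_{c₂}^n(γ)), γ). Then the discriminant of the associated binary quadratic form satisfies (Q(1,1) − Q(1,0) − Q(0,1))² − 4·Q(1,0)·Q(0,1) = m²·n²·a⁴ − 4·m·n·a². -/
/-- The standard symplectic (intersection) form on `ℤ × ℤ`. -/
def ω (a b : ℤ × ℤ) : ℤ := a.1 * b.2 - a.2 * b.1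

/-- A vector is primitive if its two coordinates are coprime. -/
def Primitive (c : ℤ × ℤ) : Prop := IsCoprime c.1 c.2

/-- The `t`-th transvection power about `c` : `γ ↦ γ + t·ω(c,γ)·c`. -/
def T (c : ℤ × ℤ) (t : ℤ) (γ : ℤ × ℤ) : ℤ × ℤ := γ + (t * ω c γ) • c

theorem discriminant_of_twist_product
    (c₁ c₂ : ℤ × ℤ) (hc₁ : Primitive c₁) (hc₂ : Primitive c₂)
    (a : ℤ) (ha : ω c₁ c₂ = a)
    (m n : ℤ) (hm : 0 < m) (hn : 0 < n)
    (Q : ℤ × ℤ → ℤ) (hQ : ∀ γ : ℤ × ℤ, Q γ = ω (T c₁ m (T c₂ n γ)) γ) :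
    (Q (1, 1) - Q (1, 0) - Q (0, 1)) ^ 2 - 4 * Q (1, 0) * Q (0, 1)
      = m ^ 2 * n ^ 2 * a ^ 4 - 4 * m * n * a ^ 2 := by
  subst ha
  simp only [hQ, T, ω, Prod.smul_fst, Prod.smul_snd, Prod.fst_add, Prod.snd_add, smul_eq_mul]
  ring
end

section
/- Let c₁, c₂, c₃, c₄ ∈ ℤ² be primitive vectors and let m, n, k, l be positive integers with m + n + k + l = 12. Suppose that T_{c₁}^m(T_{c₂}^n(γ)) = T_{c₃}^{−k}(T_{c₄}^{−l}(γ)) for every γ ∈ ℤ². Then m·n·ω(c₁,c₂)² = k·l·ω(c₃,c₄)². -/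
theorem intersections_of_factorizations
    (c₁ c₂ c₃ c₄ : ℤ × ℤ)
    (hc₁ : Primitive c₁) (hc₂ : Primitive c₂) (hc₃ : Primitive c₃) (hc₄ : Primitive c₄)
    (m n k l : ℤ) (hm : 0 < m) (hn : 0 < n) (hk : 0 < k) (hl : 0 < l)
    (hsum : m + n + k + l = 12)
    (hfact : ∀ γ : ℤ × ℤ, T c₁ m (T c₂ n γ) = T c₃ (-k) (T c₄ (-l) γ)) :
    m * n * (ω c₁ c₂) ^ 2 = k * l * (ω c₃ c₄) ^ 2 := by
  have h1 := congrArg Prod.fst (hfact (1, 0))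
  have h2 := congrArg Prod.snd (hfact (0, 1))
  simp only [T, ω, Prod.smul_mk, Prod.mk_add_mk, smul_eq_mul, Prod.fst_add, Prod.snd_add,
    Prod.smul_fst, Prod.smul_snd] at h1 h2
  simp only [ω] at h1 h2 ⊢
  linear_combination -h1 - h2
end

section
/- In the extremal setup, the following two identities hold: l·m·ω(c₁,c₂)² = (12 − l − m − n)·n·z² and m·n·ω(c₂,c₃)² = (12 − l − m − n)·l·x². -/
theorem orientation_identities
    (c₁ c₂ c₃ C : ℤ × ℤ)
    (hc₁ : Primitive c₁) (hc₂ : Primitive c₂) (hc₃ : Primitive c₃) (hC : Primitive C)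
    (l m n : ℤ) (hl : 0 < l) (hm : 0 < m) (hn : 0 < n) (hsum : l + m + n ≤ 11)
    (hfact : ∀ γ : ℤ × ℤ, T c₁ l (T c₂ m (T c₃ n γ)) = T C (l + m + n - 12) γ)
    (x y z : ℤ) (hx : x = ω C c₁) (hy : y = ω C c₂) (hz : z = ω C c₃) :
    l * m * (ω c₁ c₂) ^ 2 = (12 - l - m - n) * n * z ^ 2 ∧
    m * n * (ω c₂ c₃) ^ 2 = (12 - l - m - n) * l * x ^ 2 := by
  constructor
  · -- Trace of `T c₁ l ∘ T c₂ m = T C (l+m+n-12) ∘ T c₃ (-n)`.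
    have h1 := hfact (T c₃ (-n) (1,0))
    have h2 := hfact (T c₃ (-n) (0,1))
    simp only [T, ω, Prod.mk.injEq, Prod.ext_iff, Prod.fst_add, Prod.snd_add,
      Prod.smul_fst, Prod.smul_snd, smul_eq_mul] at h1 h2
    subst hz
    simp only [ω]
    linear_combination -h1.1 - h2.2
  · -- Trace of `T c₂ m ∘ T c₃ n = T c₁ (-l) ∘ T C (l+m+n-12)`.
    have h1 := congrArg (T c₁ (-l)) (hfact (1,0))
    have h2 := congrArg (T c₁ (-l)) (hfact (0,1))
    simp only [T, ω, Prod.mk.injEq, Prod.ext_iff, Prod.fst_add, Prod.snd_add,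
      Prod.smul_fst, Prod.smul_snd, smul_eq_mul] at h1 h2
    subst hx
    simp only [ω]
    linear_combination -h1.1 - h2.2
end

section
/- In the extremal setup, the following two identities hold: l·x² + m·y² + n·z² = −m·n·y·z·ω(c₂,c₃) and l·x² + m·y² + n·z² = −l·m·x·y·ω(c₁,c₂). -/
theorem markov_precursor_identities
    (c₁ c₂ c₃ C : ℤ × ℤ)
    (hc₁ : Primitive c₁) (hc₂ : Primitive c₂) (hc₃ : Primitive c₃) (hC : Primitive C)
    (l m n : ℤ) (hl : 0 < l) (hm : 0 < m) (hn : 0 < n) (hsum : l + m + n ≤ 11)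
    (hfact : ∀ γ : ℤ × ℤ, T c₁ l (T c₂ m (T c₃ n γ)) = T C (l + m + n - 12) γ)
    (x y z : ℤ) (hx : x = ω C c₁) (hy : y = ω C c₂) (hz : z = ω C c₃) :
    l * x ^ 2 + m * y ^ 2 + n * z ^ 2 = -(m * n * y * z * ω c₂ c₃) ∧
    l * x ^ 2 + m * y ^ 2 + n * z ^ 2 = -(l * m * x * y * ω c₁ c₂) := by
  subst hx hy hz
  have h := hfact C
  have hCC : ω C C = 0 := by simp [ω, mul_comm]
  rw [show T C (l + m + n - 12) C = C by simp [T, hCC]] at h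
  have h1 : (T c₁ l (T c₂ m (T c₃ n C))).1 = C.1 := by rw [h]
  have h2 : (T c₁ l (T c₂ m (T c₃ n C))).2 = C.2 := by rw [h]
  simp only [T, ω, Prod.fst_add, Prod.snd_add, Prod.smul_fst, Prod.smul_snd, smul_eq_mul] at h1 h2
  constructor
  · simp only [ω]
    linear_combination (l * (C.1 * c₁.2 - C.2 * c₁.1) * c₁.1 - C.1) * h2 +
      (C.2 - l * (C.1 * c₁.2 - C.2 * c₁.1) * c₁.2) * h1
  · simp only [ω]
    linear_combination (l * (C.1 * c₁.2 - C.2 * c₁.1) * c₁.1 - C.1 + m * (C.1 * c₂.2 - C.2 * c₂.1) * c₂.1 + l * m * (C.1 * c₂.2 - C.2 * c₂.1) * (c₁.1 * c₂.2 - c₁.2 * c₂.1) * c₁.1) * h2 +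
      (C.2 - l * (C.1 * c₁.2 - C.2 * c₁.1) * c₁.2 - m * (C.1 * c₂.2 - C.2 * c₂.1) * c₂.2 - l * m * (C.1 * c₂.2 - C.2 * c₂.1) * (c₁.1 * c₂.2 - c₁.2 * c₂.1) * c₁.2) * h1
end

section
/- In the extremal setup, the algebraic intersection numbers x, y, z satisfy the squared Markov-type equation (l·x² + m·y² + n·z²)² = l·m·n·(12 − l − m − n)·x²·y²·z². -/
theorem squared_markov_equation
    (c₁ c₂ c₃ C : ℤ × ℤ)
    (hc₁ : Primitive c₁) (hc₂ : Primitive c₂) (hc₃ : Primitive c₃) (hC : Primitive C)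
    (l m n : ℤ) (hl : 0 < l) (hm : 0 < m) (hn : 0 < n) (hsum : l + m + n ≤ 11)
    (hfact : ∀ γ : ℤ × ℤ, T c₁ l (T c₂ m (T c₃ n γ)) = T C (l + m + n - 12) γ)
    (x y z : ℤ) (hx : x = ω C c₁) (hy : y = ω C c₂) (hz : z = ω C c₃) :
    (l * x ^ 2 + m * y ^ 2 + n * z ^ 2) ^ 2
      = l * m * n * (12 - l - m - n) * x ^ 2 * y ^ 2 * z ^ 2 := by
  obtain ⟨a₁, b₁⟩ := c₁
  obtain ⟨a₂, b₂⟩ := c₂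
  obtain ⟨a₃, b₃⟩ := c₃
  obtain ⟨g, h⟩ := C
  have h1 := hfact (a₁, b₁)
  have h2 := hfact (a₂, b₂)
  have h3 := hfact (a₃, b₃)
  have hc := hfact (g, h)
  simp only [T, ω, Prod.mk_add_mk, Prod.smul_mk, smul_eq_mul, Prod.mk.injEq] at h1 h2 h3 hc
  obtain ⟨h1a, h1b⟩ := h1
  obtain ⟨h2a, h2b⟩ := h2
  obtain ⟨h3a, h3b⟩ := h3
  obtain ⟨hca, hcb⟩ := hc
  simp only [ω] at hx hy hz
  have hA : (12 - l - m - n) * x * y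
      = -(n * (a₂ * b₃ - b₂ * a₃) * ((a₁ * b₃ - b₁ * a₃)
        + m * (a₁ * b₂ - b₁ * a₂) * (a₂ * b₃ - b₂ * a₃))) := by
    subst hx hy
    linear_combination (-a₁) * h2b + b₁ * h2a
  have hB : (12 - l - m - n) * x * z
      = m * (a₁ * b₂ - b₁ * a₂) * (a₂ * b₃ - b₂ * a₃) := by
    subst hx hz
    linear_combination (-a₁) * h3b + b₁ * h3a
  have hC' : (12 - l - m - n) * y * z
      = -(l * (a₁ * b₂ - b₁ * a₂) * ((a₁ * b₃ - b₁ * a₃)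
        + m * (a₁ * b₂ - b₁ * a₂) * (a₂ * b₃ - b₂ * a₃))) := by
    subst hy hz
    linear_combination (-a₂) * h3b + b₂ * h3a
  have hE0 : l * x ^ 2 + m * y ^ 2 + n * z ^ 2 =
      -(l * m * (a₁ * b₂ - b₁ * a₂) * x * y + l * n * (a₁ * b₃ - b₁ * a₃) * x * z
        + m * n * (a₂ * b₃ - b₂ * a₃) * y * z
        + l * m * n * (a₁ * b₂ - b₁ * a₂) * (a₂ * b₃ - b₂ * a₃) * x * z) := by
    subst hx hy hz
    linear_combination (-g) * hcb + h * hca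
  set p : ℤ := a₁ * b₂ - b₁ * a₂
  set q : ℤ := a₁ * b₃ - b₁ * a₃
  set r : ℤ := a₂ * b₃ - b₂ * a₃
  set d : ℤ := 12 - l - m - n with hd
  have hD : d * (l * x ^ 2 + m * y ^ 2 + n * z ^ 2)
      = l * m * n * p * r * (q + m * p * r) := by
    linear_combination d * hE0 - l * m * p * hA - (l * n * q + l * m * n * p * r) * hB
      - m * n * r * hC'
  have key : d ^ 2 * ((l * x ^ 2 + m * y ^ 2 + n * z ^ 2) ^ 2
      - l * m * n * d * x ^ 2 * y ^ 2 * z ^ 2) = 0 := by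
    linear_combination (d * (l * x ^ 2 + m * y ^ 2 + n * z ^ 2)
        + l * m * n * p * r * (q + m * p * r)) * hD
      - l * m * n * ((d * x * z) * (d * y * z)) * hA
      - (l * m * n * (-(n * r * (q + m * p * r))) * (d * y * z)) * hB
      - (l * m * n * (-(n * r * (q + m * p * r))) * (m * p * r)) * hC'
  have hdpos : 0 < d := by omega
  have hd2 : d ^ 2 ≠ 0 := pow_ne_zero 2 (ne_of_gt hdpos)
  have := (mul_eq_zero.mp key).resolve_left hd2
  have hfin := sub_eq_zero.mp this
  linarith [hfin]
end

section
/- In the extremal setup, none of the intersection numbers vanish: x ≠ 0, y ≠ 0, and z ≠ 0. -/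
lemma T_fst (c : ℤ × ℤ) (t : ℤ) (γ : ℤ × ℤ) :
    (T c t γ).1 = γ.1 + (t * (c.1 * γ.2 - c.2 * γ.1)) * c.1 := by
  simp [T, ω]

lemma T_snd (c : ℤ × ℤ) (t : ℤ) (γ : ℤ × ℤ) :
    (T c t γ).2 = γ.2 + (t * (c.1 * γ.2 - c.2 * γ.1)) * c.2 := by
  simp [T, ω]

lemma T_add (c : ℤ × ℤ) (s t : ℤ) (γ : ℤ × ℤ) :
    T c t (T c s γ) = T c (s + t) γ := by
  apply Prod.ext <;> simp [T_fst, T_snd] <;> ring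

lemma T_zero (c : ℤ × ℤ) (γ : ℤ × ℤ) : T c 0 γ = γ := by
  apply Prod.ext <;> simp [T_fst, T_snd]

lemma T_neg_vec (c : ℤ × ℤ) (t : ℤ) (γ : ℤ × ℤ) : T (-c) t γ = T c t γ := by
  apply Prod.ext <;> simp [T_fst, T_snd] <;> ring

lemma T_conj (C c : ℤ × ℤ) (s t : ℤ) (γ : ℤ × ℤ) :
    T C s (T c t γ) = T (T C s c) t (T C s γ) := by
  apply Prod.ext <;> simp [T_fst, T_snd] <;> ring

lemma prim_T (C c : ℤ × ℤ) (s : ℤ) (hc : Primitive c) : Primitive (T C s c) := by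
  obtain ⟨a, b, hab⟩ := hc
  refine ⟨a + s * C.2 * (a * C.1 + b * C.2), b - s * C.1 * (a * C.1 + b * C.2), ?_⟩
  simp only [T_fst, T_snd]
  linear_combination hab

lemma sq_sum_pos (u : ℤ × ℤ) (hu : Primitive u) : 0 < u.1 * u.1 + u.2 * u.2 := by
  have h : u.1 ≠ 0 ∨ u.2 ≠ 0 := by
    by_contra hc
    push_neg at hc
    simp only [Primitive, hc.1, hc.2] at hu
    exact not_isCoprime_zero_zero hu
  rcases h with h | h
  · nlinarith [mul_self_nonneg u.2, mul_self_pos.mpr h]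
  · nlinarith [mul_self_nonneg u.1, mul_self_pos.mpr h]

lemma parallel (u v : ℤ × ℤ) (hu : Primitive u) (hv : Primitive v) (h : ω u v = 0) :
    v = u ∨ v = -u := by
  obtain ⟨a, b, hab⟩ := hu
  simp only [ω] at h
  set k := a * v.1 + b * v.2 with hk
  have hv1 : v.1 = k * u.1 := by rw [hk]; linear_combination (-v.1) * hab - b * h
  have hv2 : v.2 = k * u.2 := by rw [hk]; linear_combination (-v.2) * hab + a * h
  have hdvd1 : k ∣ v.1 := ⟨u.1, hv1⟩
  have hdvd2 : k ∣ v.2 := ⟨u.2, hv2⟩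
  have hunit : IsUnit k := hv.isUnit_of_dvd' hdvd1 hdvd2
  rcases Int.isUnit_iff.mp hunit with h1 | h1
  · left; apply Prod.ext <;> simp [hv1, hv2, h1]
  · right; apply Prod.ext <;> simp [hv1, hv2, h1]

lemma key_of_eq {u C : ℤ × ℤ} {s r : ℤ} {γ : ℤ × ℤ} (h : T u s γ = T C r γ) :
    s * (ω u γ) ^ 2 = r * (ω C γ) ^ 2 := by
  have e1 := congrArg Prod.fst h
  have e2 := congrArg Prod.snd h
  simp only [T_fst, T_snd] at e1 e2
  simp only [ω]
  linear_combination γ.2 * e1 - γ.1 * e2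

lemma two_twist (u v C : ℤ × ℤ) (hu : Primitive u) (hv : Primitive v)
    (s t r : ℤ) (hs : 0 < s) (ht : 0 < t) (hr : r < 0)
    (h : ∀ γ, T u s (T v t γ) = T C r γ) : False := by
  -- evaluate at v
  have hvv : T v t v = v := by
    apply Prod.ext <;> simp only [T_fst, T_snd] <;> ring
  have h1 : T u s v = T C r v := by have := h v; rwa [hvv] at this
  have key1 : s * (ω u v) ^ 2 = r * (ω C v) ^ 2 := key_of_eq h1
  have hA : ω u v = 0 := by
    have h2 : (ω u v) ^ 2 = 0 := by
      nlinarith [sq_nonneg (ω u v), sq_nonneg (ω C v),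
        mul_nonneg hs.le (sq_nonneg (ω u v)),
        mul_nonpos_of_nonpos_of_nonneg hr.le (sq_nonneg (ω C v)),
        mul_nonneg (by linarith : (0:ℤ) ≤ s - 1) (sq_nonneg (ω u v))]
    exact pow_eq_zero_iff (by norm_num) |>.mp h2
  have hT : ∀ (t' : ℤ) (γ : ℤ × ℤ), T v t' γ = T u t' γ := by
    rcases parallel u v hu hv hA with hpar | hpar
    · intro t' γ; rw [hpar]
    · intro t' γ; rw [hpar, T_neg_vec]
  have h' : ∀ γ, T u (t + s) γ = T C r γ := fun γ => by
    rw [← T_add, ← hT t γ]; exact h γ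
  have key2 : (t + s) * (ω u (-u.2, u.1)) ^ 2 = r * (ω C (-u.2, u.1)) ^ 2 :=
    key_of_eq (h' (-u.2, u.1))
  have hQ : ω u (-u.2, u.1) = u.1 * u.1 + u.2 * u.2 := by simp only [ω]; ring
  have hQpos := sq_sum_pos u hu
  rw [hQ] at key2
  nlinarith [sq_nonneg (ω C (-u.2, u.1)),
    mul_nonpos_of_nonpos_of_nonneg hr.le (sq_nonneg (ω C (-u.2, u.1))),
    mul_pos (by linarith : (0:ℤ) < t + s) (mul_pos hQpos hQpos)]

theorem intersection_numbers_nonzero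
    (c₁ c₂ c₃ C : ℤ × ℤ)
    (hc₁ : Primitive c₁) (hc₂ : Primitive c₂) (hc₃ : Primitive c₃) (hC : Primitive C)
    (l m n : ℤ) (hl : 0 < l) (hm : 0 < m) (hn : 0 < n) (hsum : l + m + n ≤ 11)
    (hfact : ∀ γ : ℤ × ℤ, T c₁ l (T c₂ m (T c₃ n γ)) = T C (l + m + n - 12) γ)
    (x y z : ℤ) (hx : x = ω C c₁) (hy : y = ω C c₂) (hz : z = ω C c₃) :
    x ≠ 0 ∧ y ≠ 0 ∧ z ≠ 0 := by
  refine ⟨?_, ?_, ?_⟩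
  · -- x ≠ 0
    intro hx0
    have hω : ω C c₁ = 0 := by rw [← hx, hx0]
    have hT1 : ∀ (t : ℤ) (δ : ℤ × ℤ), T c₁ t δ = T C t δ := by
      rcases parallel C c₁ hC hc₁ hω with h | h
      · intro t δ; rw [h]
      · intro t δ; rw [h, T_neg_vec]
    have h2 : ∀ γ, T c₂ m (T c₃ n γ) = T C (m + n - 12) γ := by
      intro γ
      have h3 := congrArg (T C (-l)) ((hT1 l _) ▸ hfact γ)
      rw [T_add, T_add, show l + -l = 0 by ring, T_zero,
        show l + m + n - 12 + -l = m + n - 12 by ring] at h3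
      exact h3
    exact two_twist c₂ c₃ C hc₂ hc₃ m n (m + n - 12) hm hn (by linarith) h2
  · -- y ≠ 0
    intro hy0
    have hω : ω C c₂ = 0 := by rw [← hy, hy0]
    have hT2 : ∀ (t : ℤ) (δ : ℤ × ℤ), T c₂ t δ = T C t δ := by
      rcases parallel C c₂ hC hc₂ hω with h | h
      · intro t δ; rw [h]
      · intro t δ; rw [h, T_neg_vec]
    have hu' : Primitive (T C (-m) c₁) := prim_T C c₁ (-m) hc₁
    have h2 : ∀ γ, T (T C (-m) c₁) l (T c₃ n γ) = T C (l + n - 12) γ := by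
      intro γ
      have h0 := hfact γ
      rw [hT2 m] at h0
      have h3 := congrArg (T C (-m)) h0
      rw [T_conj, T_add, show m + -m = 0 by ring, T_zero,
        T_add, show l + m + n - 12 + -m = l + n - 12 by ring] at h3
      exact h3
    exact two_twist (T C (-m) c₁) c₃ C hu' hc₃ l n (l + n - 12) hl hn (by linarith) h2
  · -- z ≠ 0
    intro hz0
    have hω : ω C c₃ = 0 := by rw [← hz, hz0]
    have hT3 : ∀ (t : ℤ) (δ : ℤ × ℤ), T c₃ t δ = T C t δ := by
      rcases parallel C c₃ hC hc₃ hω with h | h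
      · intro t δ; rw [h]
      · intro t δ; rw [h, T_neg_vec]
    have h2 : ∀ γ, T c₁ l (T c₂ m γ) = T C (l + m - 12) γ := by
      intro γ
      have h3 := hfact (T C (-n) γ)
      rw [hT3 n, T_add, show -n + n = 0 by ring, T_zero,
        T_add, show -n + (l + m + n - 12) = l + m - 12 by ring] at h3
      exact h3
    exact two_twist c₁ c₂ C hc₁ hc₂ l m (l + m - 12) hl hm (by linarith) h2
end

section
/- In the extremal setup, the following identity holds: l·x² + m·y² + n·z² + m·n·y·z·ω(c₂,c₃) + l·n·x·z·ω(c₁,c₃) + l·m·x·y·ω(c₁,c₂) + l·m·n·x·z·ω(c₁,c₂)·ω(c₂,c₃) = 0. -/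
theorem pairing_with_C_identity
    (c₁ c₂ c₃ C : ℤ × ℤ)
    (hc₁ : Primitive c₁) (hc₂ : Primitive c₂) (hc₃ : Primitive c₃) (hC : Primitive C)
    (l m n : ℤ) (hl : 0 < l) (hm : 0 < m) (hn : 0 < n) (hsum : l + m + n ≤ 11)
    (hfact : ∀ γ : ℤ × ℤ, T c₁ l (T c₂ m (T c₃ n γ)) = T C (l + m + n - 12) γ)
    (x y z : ℤ) (hx : x = ω C c₁) (hy : y = ω C c₂) (hz : z = ω C c₃) :
    l * x ^ 2 + m * y ^ 2 + n * z ^ 2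
      + m * n * y * z * ω c₂ c₃
      + l * n * x * z * ω c₁ c₃
      + l * m * x * y * ω c₁ c₂
      + l * m * n * x * z * ω c₁ c₂ * ω c₂ c₃ = 0 := by
  have h := congrArg (ω C) (hfact C)
  simp only [T, ω, Prod.smul_def, Prod.mk_add_mk, Prod.fst_add, Prod.snd_add, smul_eq_mul,
    Prod.smul_fst, Prod.smul_snd] at h
  subst hx hy hz
  simp only [ω]
  ring_nf at h ⊢
  linarith [h]
end

section
/- In the extremal setup, the following identity holds: l·n·(ω(c₁,c₃) + m·ω(c₁,c₂)·ω(c₂,c₃))² = (12 − l − m − n)·m·y². -/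
private lemma sq_zero_of_le_zero {p : ℤ} (h : p ^ 2 ≤ 0) : p = 0 :=
  pow_eq_zero_iff (n := 2) two_ne_zero |>.mp (le_antisymm h (sq_nonneg _))

private lemma aux_three_sq (l m n p q r : ℤ) (hl : 0 < l) (hm : 0 < m) (hn : 0 < n)
    (hs : l * m * p ^ 2 + l * n * q ^ 2 + m * n * r ^ 2 = 0) :
    p = 0 ∧ q = 0 ∧ r = 0 := by
  have hlm1 : (1 : ℤ) ≤ l * m := Int.add_one_le_of_lt (mul_pos hl hm)
  have hln1 : (1 : ℤ) ≤ l * n := Int.add_one_le_of_lt (mul_pos hl hn)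
  have hmn1 : (1 : ℤ) ≤ m * n := Int.add_one_le_of_lt (mul_pos hm hn)
  refine ⟨sq_zero_of_le_zero ?_, sq_zero_of_le_zero ?_, sq_zero_of_le_zero ?_⟩
  · nlinarith [mul_nonneg (by linarith : (0:ℤ) ≤ l * m - 1) (sq_nonneg p),
      mul_nonneg (by linarith : (0:ℤ) ≤ l * n) (sq_nonneg q),
      mul_nonneg (by linarith : (0:ℤ) ≤ m * n) (sq_nonneg r)]
  · nlinarith [mul_nonneg (by linarith : (0:ℤ) ≤ l * n - 1) (sq_nonneg q),
      mul_nonneg (by linarith : (0:ℤ) ≤ l * m) (sq_nonneg p),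
      mul_nonneg (by linarith : (0:ℤ) ≤ m * n) (sq_nonneg r)]
  · nlinarith [mul_nonneg (by linarith : (0:ℤ) ≤ m * n - 1) (sq_nonneg r),
      mul_nonneg (by linarith : (0:ℤ) ≤ l * m) (sq_nonneg p),
      mul_nonneg (by linarith : (0:ℤ) ≤ l * n) (sq_nonneg q)]

private lemma aux_neg_sq (l m n t u v w s : ℤ) (hl : 0 < l) (hm : 0 < m) (hn : 0 < n)
    (ht : t ≤ -1) (hs : l * u ^ 2 + m * v ^ 2 + n * w ^ 2 = t * s ^ 2) : u = 0 := by
  have hl1 : (1 : ℤ) ≤ l := hl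
  refine sq_zero_of_le_zero ?_
  nlinarith [mul_nonneg (by linarith : (0:ℤ) ≤ l - 1) (sq_nonneg u),
    mul_nonneg (by linarith : (0:ℤ) ≤ m) (sq_nonneg v),
    mul_nonneg (by linarith : (0:ℤ) ≤ n) (sq_nonneg w),
    mul_nonneg (by linarith : (0:ℤ) ≤ -t) (sq_nonneg s)]

theorem orientation_y_identity
    (c₁ c₂ c₃ C : ℤ × ℤ)
    (hc₁ : Primitive c₁) (hc₂ : Primitive c₂) (hc₃ : Primitive c₃) (hC : Primitive C)
    (l m n : ℤ) (hl : 0 < l) (hm : 0 < m) (hn : 0 < n) (hsum : l + m + n ≤ 11)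
    (hfact : ∀ γ : ℤ × ℤ, T c₁ l (T c₂ m (T c₃ n γ)) = T C (l + m + n - 12) γ)
    (x y z : ℤ) (hx : x = ω C c₁) (hy : y = ω C c₂) (hz : z = ω C c₃) :
    l * n * (ω c₁ c₃ + m * ω c₁ c₂ * ω c₂ c₃) ^ 2
      = (12 - l - m - n) * m * y ^ 2 := by
  have h1 := hfact (1,0)
  have h2 := hfact (0,1)
  simp only [T, ω, Prod.ext_iff, Prod.fst_add, Prod.snd_add, Prod.smul_fst, Prod.smul_snd,
    smul_eq_mul] at h1 h2
  obtain ⟨ha, hb⟩ := h1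
  obtain ⟨hc, hd⟩ := h2
  obtain ⟨a1, a2⟩ := c₁
  obtain ⟨b1, b2⟩ := c₂
  obtain ⟨d1, d2⟩ := c₃
  obtain ⟨e1, e2⟩ := C
  simp only [ω] at hx hy hz ⊢
  subst hx hy hz
  -- key identities (from pairing the matrix identity with vectors)
  have hA : l * ((a1 * d2 - a2 * d1) + m * (a1 * b2 - a2 * b1) * (b1 * d2 - b2 * d1)) * (e1 * a2 - e2 * a1)
      + m * (b1 * d2 - b2 * d1) * (e1 * b2 - e2 * b1) = 0 := by
    linear_combination e1 * (d1 * hb + d2 * hd) - e2 * (d1 * ha + d2 * hc)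
  have hB : (l + m + n - 12) * (e1 * a2 - e2 * a1) * (e1 * b2 - e2 * b1)
      = n * ((a1 * d2 - a2 * d1) + m * (a1 * b2 - a2 * b1) * (b1 * d2 - b2 * d1)) * (b1 * d2 - b2 * d1) := by
    linear_combination a1 * (b1 * hb + b2 * hd) - a2 * (b1 * ha + b2 * hc)
  by_cases hx0 : (e1 * a2 - e2 * a1) = 0
  · -- degenerate case: x = 0 leads to a contradiction with primitivity
    exfalso
    have hC1 : m * (a1 * b2 - a2 * b1) * (b1 * d2 - b2 * d1)
        + (l + m + n - 12) * (e1 * a2 - e2 * a1) * (e1 * d2 - e2 * d1) = 0 := by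
      linear_combination a1 * (d1 * hb + d2 * hd) - a2 * (d1 * ha + d2 * hc)
    have htr : l * m * (a1 * b2 - a2 * b1) ^ 2 + l * n * (a1 * d2 - a2 * d1) ^ 2
        + m * n * (b1 * d2 - b2 * d1) ^ 2
        + l * m * n * (a1 * b2 - a2 * b1) * (b1 * d2 - b2 * d1) * (a1 * d2 - a2 * d1) = 0 := by
      linear_combination -ha - hd
    have h12230 : (a1 * b2 - a2 * b1) * (b1 * d2 - b2 * d1) = 0 := by
      have h' : m * ((a1 * b2 - a2 * b1) * (b1 * d2 - b2 * d1)) = 0 := by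
        linear_combination hC1 - (l + m + n - 12) * (e1 * d2 - e2 * d1) * hx0
      exact (mul_eq_zero.mp h').resolve_left hm.ne'
    have hsq : l * m * (a1 * b2 - a2 * b1) ^ 2 + l * n * (a1 * d2 - a2 * d1) ^ 2
        + m * n * (b1 * d2 - b2 * d1) ^ 2 = 0 := by
      linear_combination htr - l * m * n * (a1 * d2 - a2 * d1) * h12230
    obtain ⟨h12, h13, h23⟩ := aux_three_sq l m n _ _ _ hl hm hn hsq
    have he1 : l * a1 ^ 2 + m * b1 ^ 2 + n * d1 ^ 2 = (l + m + n - 12) * e1 ^ 2 := by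
      linear_combination hc - l * m * a1 * b1 * h12 - l * n * a1 * d1 * h13
        - m * n * b1 * d1 * h23 - l * m * n * a1 * d1 * (b1 * d2 - b2 * d1) * h12
    have he2 : l * a2 ^ 2 + m * b2 ^ 2 + n * d2 ^ 2 = (l + m + n - 12) * e2 ^ 2 := by
      linear_combination -hb - l * m * a2 * b2 * h12 - l * n * a2 * d2 * h13
        - m * n * b2 * d2 * h23 - l * m * n * a2 * d2 * (b1 * d2 - b2 * d1) * h12
    have htneg : (l + m + n - 12) ≤ -1 := by omega
    have hA1 : a1 = 0 := aux_neg_sq l m n _ _ _ _ _ hl hm hn htneg he1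
    have hA2 : a2 = 0 := aux_neg_sq l m n _ _ _ _ _ hl hm hn htneg he2
    rw [Primitive] at hc₁
    simp only at hc₁
    rw [hA1, hA2] at hc₁
    exact not_isCoprime_zero_zero hc₁
  · -- main case: cancel x
    have key : (e1 * a2 - e2 * a1)
        * (l * n * ((a1 * d2 - a2 * d1) + m * (a1 * b2 - a2 * b1) * (b1 * d2 - b2 * d1)) ^ 2 + (l + m + n - 12) * m * (e1 * b2 - e2 * b1) ^ 2) = 0 := by
      linear_combination (n * ((a1 * d2 - a2 * d1) + m * (a1 * b2 - a2 * b1) * (b1 * d2 - b2 * d1))) * hA + (m * (e1 * b2 - e2 * b1)) * hB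
    have hz0 : l * n * ((a1 * d2 - a2 * d1) + m * (a1 * b2 - a2 * b1) * (b1 * d2 - b2 * d1)) ^ 2 + (l + m + n - 12) * m * (e1 * b2 - e2 * b1) ^ 2 = 0 :=
      (mul_eq_zero.mp key).resolve_left hx0
    linear_combination hz0
end

section
/- In the extremal setup, there exists a unique triple of signs (ε₁, ε₂, ε₃) ∈ {−1, 1}³ such that ε₁·x > 0, ε₂·y > 0, ε₃·z > 0, ε₁·ε₂·ω(c₁,c₂) < 0, and ε₂·ε₃·ω(c₂,c₃) < 0 (the unique admissible choice of orientation of the vanishing cycles). -/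
set_option maxHeartbeats 3200000 in
theorem unique_admissible_orientation
    (c₁ c₂ c₃ C : ℤ × ℤ)
    (hc₁ : Primitive c₁) (hc₂ : Primitive c₂) (hc₃ : Primitive c₃) (hC : Primitive C)
    (l m n : ℤ) (hl : 0 < l) (hm : 0 < m) (hn : 0 < n) (hsum : l + m + n ≤ 11)
    (hfact : ∀ γ : ℤ × ℤ, T c₁ l (T c₂ m (T c₃ n γ)) = T C (l + m + n - 12) γ)
    (x y z : ℤ) (hx : x = ω C c₁) (hy : y = ω C c₂) (hz : z = ω C c₃) :
    ∃! ε : ℤ × ℤ × ℤ,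
      (ε.1 = 1 ∨ ε.1 = -1) ∧ (ε.2.1 = 1 ∨ ε.2.1 = -1) ∧ (ε.2.2 = 1 ∨ ε.2.2 = -1) ∧
      0 < ε.1 * x ∧ 0 < ε.2.1 * y ∧ 0 < ε.2.2 * z ∧
      ε.1 * ε.2.1 * ω c₁ c₂ < 0 ∧ ε.2.1 * ε.2.2 * ω c₂ c₃ < 0 := by
  obtain ⟨t, htdef⟩ : ∃ w : ℤ, w = l + m + n - 12 := ⟨_, rfl⟩
  have ht : t < 0 := by omega
  obtain ⟨a, hadef⟩ : ∃ w : ℤ, w = ω c₁ c₂ := ⟨_, rfl⟩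
  obtain ⟨b, hbdef⟩ : ∃ w : ℤ, w = ω c₂ c₃ := ⟨_, rfl⟩
  obtain ⟨d, hddef⟩ : ∃ w : ℤ, w = ω c₁ c₃ := ⟨_, rfl⟩
  obtain ⟨S, hSdef⟩ : ∃ w : ℤ, w = d + m*a*b := ⟨_, rfl⟩
  rw [← hadef, ← hbdef]
  have hSdef' : S = ω c₁ c₃ + m * ω c₁ c₂ * ω c₂ c₃ := by rw [hSdef, hadef, hbdef, hddef]
  -- relations
  have R1 : t*x*z + m*(a*b) = 0 := by
    have H := hfact c₃
    simp only [T, ω, Prod.ext_iff, Prod.fst_add, Prod.snd_add, Prod.smul_fst, Prod.smul_snd,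
      smul_eq_mul] at H
    obtain ⟨H1, H2⟩ := H
    simp only [htdef, hadef, hbdef, hddef, hx, hy, hz, ω]
    linear_combination c₁.1 * H2 - c₁.2 * H1
  have R2 : t*(y*z) = l*(a*S) := by
    have H := hfact c₃
    simp only [T, ω, Prod.ext_iff, Prod.fst_add, Prod.snd_add, Prod.smul_fst, Prod.smul_snd,
      smul_eq_mul] at H
    obtain ⟨H1, H2⟩ := H
    simp only [htdef, hSdef', hadef, hbdef, hddef, hx, hy, hz, ω]
    linear_combination c₂.1 * H2 - c₂.2 * H1
  have R3 : t*(x*y) = n*(b*S) := by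
    have H := hfact c₂
    simp only [T, ω, Prod.ext_iff, Prod.fst_add, Prod.snd_add, Prod.smul_fst, Prod.smul_snd,
      smul_eq_mul] at H
    obtain ⟨H1, H2⟩ := H
    simp only [htdef, hSdef', hadef, hbdef, hddef, hx, hy, hz, ω]
    linear_combination c₁.1 * H2 - c₁.2 * H1
  have R4 : l*m*(a*b*S) = m*b^2 + l*S^2 - t*z^2 := by
    have H := hfact c₃
    simp only [T, ω, Prod.ext_iff, Prod.fst_add, Prod.snd_add, Prod.smul_fst, Prod.smul_snd,
      smul_eq_mul] at H
    obtain ⟨H1, H2⟩ := H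
    simp only [htdef, hSdef', hadef, hbdef, hddef, hx, hy, hz, ω]
    linear_combination c₃.1 * H2 - c₃.2 * H1
  by_cases hdeg : b = 0 ∧ S = 0 ∧ z = 0
  · exfalso
    obtain ⟨hb0, hS0, hz0⟩ := hdeg
    have hd0 : d = 0 := by
      rw [hSdef, hb0] at hS0; simpa using hS0
    have Rc2 : n*b^2 + l*((a - n*b*d) - m*n*a*b^2)*a = t*y^2 := by
      have H := hfact c₂
      simp only [T, ω, Prod.ext_iff, Prod.fst_add, Prod.snd_add, Prod.smul_fst, Prod.smul_snd,
        smul_eq_mul] at H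
      obtain ⟨H1, H2⟩ := H
      simp only [htdef, hadef, hbdef, hddef, hx, hy, hz, ω]
      linear_combination c₂.2 * H1 - c₂.1 * H2
    have Rc2' : l*(a*a) = t*y^2 := by
      linear_combination Rc2 - (n*b - l*n*d*a - l*m*n*a^2*b) * hb0
    have h1 : a*a ≤ 0 := by nlinarith [sq_nonneg y]
    have ha0 : a = 0 := mul_self_eq_zero.mp (le_antisymm h1 (mul_self_nonneg a))
    obtain ⟨p, q, hpq⟩ := hc₁
    obtain ⟨u, hudef⟩ : ∃ w : ℤ × ℤ, w = ((-q : ℤ), p) := ⟨_, rfl⟩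
    have hu : ω c₁ u = 1 := by
      simp only [hudef, ω]
      linear_combination hpq
    have Ru : n*(ω c₃ u)^2 + m*(ω c₂ u + n*(ω c₃ u)*b)*(ω c₂ u)
        + l*(ω c₁ u + n*(ω c₃ u)*d + m*a*(ω c₂ u + n*(ω c₃ u)*b))*(ω c₁ u) = t*(ω C u)^2 := by
      have H := hfact u
      simp only [T, ω, Prod.ext_iff, Prod.fst_add, Prod.snd_add, Prod.smul_fst, Prod.smul_snd,
        smul_eq_mul] at H
      obtain ⟨H1, H2⟩ := H
      simp only [htdef, hadef, hbdef, hddef, ω]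
      linear_combination u.2 * H1 - u.1 * H2
    rw [hu, ha0, hb0, hd0] at Ru
    nlinarith [Ru, sq_nonneg (ω c₃ u), sq_nonneg (ω c₂ u), sq_nonneg (ω C u)]
  · push_neg at hdeg
    have pos : 0 < m*b^2 + l*S^2 - t*z^2 := by
      clear R1 R2 R3 R4 hfact
      rcases eq_or_ne b 0 with hb0 | hb0
      · rcases eq_or_ne S 0 with hS0 | hS0
        · have hz0 := hdeg hb0 hS0
          have hzz : 0 < z^2 := lt_of_le_of_ne (sq_nonneg z) (Ne.symm (pow_ne_zero 2 hz0))
          nlinarith [sq_nonneg b, sq_nonneg S]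
        · have hSS : 0 < S^2 := lt_of_le_of_ne (sq_nonneg S) (Ne.symm (pow_ne_zero 2 hS0))
          nlinarith [sq_nonneg b, sq_nonneg z]
      · have hbb : 0 < b^2 := lt_of_le_of_ne (sq_nonneg b) (Ne.symm (pow_ne_zero 2 hb0))
        nlinarith [sq_nonneg S, sq_nonneg z]
    have habs : 0 < a*b*S := by
      by_contra hcon
      push_neg at hcon
      have h2 : l*m*(a*b*S) ≤ 0 :=
        mul_nonpos_of_nonneg_of_nonpos (le_of_lt (mul_pos hl hm)) hcon
      have h3 := R4
      clear R1 R2 R3 R4 hfact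
      linarith [h3]
    obtain ⟨hab0, hS0⟩ := mul_ne_zero_iff.mp habs.ne'
    obtain ⟨ha0, hb0⟩ := mul_ne_zero_iff.mp hab0
    have hx0 : x ≠ 0 := by
      intro h
      have hmab : m*(a*b) = 0 := by linear_combination R1 - (t*z)*h
      rcases mul_eq_zero.mp hmab with h' | h'
      · exact absurd h' (ne_of_gt hm)
      · exact hab0 h'
    have hz0 : z ≠ 0 := by
      intro h
      have hmab : m*(a*b) = 0 := by linear_combination R1 - (t*x)*h
      rcases mul_eq_zero.mp hmab with h' | h'
      · exact absurd h' (ne_of_gt hm)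
      · exact hab0 h'
    have hy0 : y ≠ 0 := by
      intro h
      have hnbs : n*(b*S) = 0 := by linear_combination (t*x)*h - R3
      rcases mul_eq_zero.mp hnbs with h' | h'
      · exact absurd h' (ne_of_gt hn)
      · exact (mul_ne_zero hb0 hS0) h'
    have key1 : t*(a*(x*y)) = n*(a*(b*S)) := by linear_combination a * R3
    have key2 : t*(b*(y*z)) = l*(b*(a*S)) := by linear_combination b * R2
    have hax : a*(x*y) < 0 := by
      clear R1 R2 R3 R4 hfact key2 pos
      nlinarith [key1, mul_pos hn habs]
    have hby : b*(y*z) < 0 := by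
      clear R1 R2 R3 R4 hfact key1 pos hax
      nlinarith [key2, mul_pos hl habs]
    clear R1 R2 R3 R4 key1 key2 hfact pos habs
    refine ⟨⟨if 0 < x then 1 else -1, if 0 < y then 1 else -1, if 0 < z then 1 else -1⟩,
      ⟨?_, ?_, ?_, ?_, ?_, ?_, ?_, ?_⟩, ?_⟩
    · dsimp only; split_ifs <;> simp
    · dsimp only; split_ifs <;> simp
    · dsimp only; split_ifs <;> simp
    · dsimp only; split_ifs with h
      · linarith
      · have : x < 0 := lt_of_le_of_ne (not_lt.mp h) hx0
        linarith
    · dsimp only; split_ifs with h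
      · linarith
      · have : y < 0 := lt_of_le_of_ne (not_lt.mp h) hy0
        linarith
    · dsimp only; split_ifs with h
      · linarith
      · have : z < 0 := lt_of_le_of_ne (not_lt.mp h) hz0
        linarith
    · dsimp only; split_ifs with h1 h2 h2
      · nlinarith [hax, mul_pos h1 h2]
      · have hy' : y < 0 := lt_of_le_of_ne (not_lt.mp h2) hy0
        nlinarith [hax, mul_pos h1 (neg_pos.mpr hy')]
      · have hx' : x < 0 := lt_of_le_of_ne (not_lt.mp h1) hx0
        nlinarith [hax, mul_pos (neg_pos.mpr hx') h2]
      · have hx' : x < 0 := lt_of_le_of_ne (not_lt.mp h1) hx0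
        have hy' : y < 0 := lt_of_le_of_ne (not_lt.mp h2) hy0
        nlinarith [hax, mul_pos (neg_pos.mpr hx') (neg_pos.mpr hy')]
    · dsimp only; split_ifs with h1 h2 h2
      · nlinarith [hby, mul_pos h1 h2]
      · have hz' : z < 0 := lt_of_le_of_ne (not_lt.mp h2) hz0
        nlinarith [hby, mul_pos h1 (neg_pos.mpr hz')]
      · have hy' : y < 0 := lt_of_le_of_ne (not_lt.mp h1) hy0
        nlinarith [hby, mul_pos (neg_pos.mpr hy') h2]
      · have hy' : y < 0 := lt_of_le_of_ne (not_lt.mp h1) hy0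
        have hz' : z < 0 := lt_of_le_of_ne (not_lt.mp h2) hz0
        nlinarith [hby, mul_pos (neg_pos.mpr hy') (neg_pos.mpr hz')]
    · rintro ⟨f₁, f₂, f₃⟩ ⟨hf1, hf2, hf3, hfx, hfy, hfz, -, -⟩
      dsimp only at hf1 hf2 hf3 hfx hfy hfz
      simp only [Prod.mk.injEq]
      refine ⟨?_, ?_, ?_⟩
      · rcases hf1 with rfl | rfl <;> split_ifs with h <;>
          first | rfl | (exfalso; simp only [one_mul, neg_one_mul] at hfx; linarith)
      · rcases hf2 with rfl | rfl <;> split_ifs with h <;>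
          first | rfl | (exfalso; simp only [one_mul, neg_one_mul] at hfy; linarith)
      · rcases hf3 with rfl | rfl <;> split_ifs with h <;>
          first | rfl | (exfalso; simp only [one_mul, neg_one_mul] at hfz; linarith)
end

section
/- Under the braid (Hurwitz) move, the Auroux invariant transforms as k ↦ −k⁻¹ modulo n: let (c₁,c₂) be a pair of primitive vectors in ℤ² with ω(c₁,c₂) = n > 0 and Auroux invariant k, and let k' be an Auroux invariant of the pair (−(c₂ + n·c₁), c₁). Then k·k' ≡ −1 (mod n). -/
/-- `k` is an Auroux invariant of the pair `(c₁, c₂)` with intersection number `n`. -/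
def AurouxInv (c₁ c₂ : ℤ × ℤ) (n k : ℤ) : Prop :=
  ∃ u v : ℤ × ℤ, ω u v = 1 ∧ c₁ = u ∧ c₂ = n • v + k • u

theorem auroux_invariant_hurwitz_move
    (c₁ c₂ : ℤ × ℤ) (hc₁ : Primitive c₁) (hc₂ : Primitive c₂)
    (n : ℤ) (hn : 0 < n) (hω : ω c₁ c₂ = n)
    (k k' : ℤ) (hk : AurouxInv c₁ c₂ n k) (hk' : AurouxInv (-(c₂ + n • c₁)) c₁ n k') :
    k * k' ≡ -1 [ZMOD n] := by
  obtain ⟨u, v, huv, hc1u, hc2⟩ := hk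
  obtain ⟨u', v', huv', hd1, hd2⟩ := hk'
  -- component equations
  have e1 : u.1 = n * v'.1 + k' * u'.1 := by
    have := congrArg Prod.fst hd2; simpa [hc1u, Prod.smul_def, smul_eq_mul] using this
  have e2 : u.2 = n * v'.2 + k' * u'.2 := by
    have := congrArg Prod.snd hd2; simpa [hc1u, Prod.smul_def, smul_eq_mul] using this
  have f1 : u'.1 = -(c₂.1 + n * c₁.1) := by
    have := congrArg Prod.fst hd1; simpa [Prod.smul_def, smul_eq_mul] using this.symm
  have f2 : u'.2 = -(c₂.2 + n * c₁.2) := by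
    have := congrArg Prod.snd hd1; simpa [Prod.smul_def, smul_eq_mul] using this.symm
  have g1 : c₂.1 = n * v.1 + k * u.1 := by
    have := congrArg Prod.fst hc2; simpa [Prod.smul_def, smul_eq_mul] using this
  have g2 : c₂.2 = n * v.2 + k * u.2 := by
    have := congrArg Prod.snd hc2; simpa [Prod.smul_def, smul_eq_mul] using this
  have h1 : c₁.1 = u.1 := by rw [hc1u]
  have h2 : c₁.2 = u.2 := by rw [hc1u]
  have huv : u.1 * v.2 - u.2 * v.1 = 1 := huv
  have E1 : u.1 * (1 + k' * k + k' * n) = n * (v'.1 - k' * v.1) := by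
    linear_combination e1 + k' * f1 - k' * g1 - k' * n * h1
  have E2 : u.2 * (1 + k' * k + k' * n) = n * (v'.2 - k' * v.2) := by
    linear_combination e2 + k' * f2 - k' * g2 - k' * n * h2
  have key : k * k' - (-1) = n * (v'.1 * v.2 - v'.2 * v.1 - k') := by
    linear_combination v.2 * E1 - v.1 * E2 - (1 + k' * k + k' * n) * huv
  exact Int.ModEq.symm (Int.modEq_iff_dvd.mpr ⟨_, key⟩)
end

section
/- Two pairs lie in the same SL(2,ℤ)-orbit if and only if they have the same Auroux invariant: let (c₁,c₂) and (c₃,c₄) be pairs of primitive vectors in ℤ² with ω(c₁,c₂) = ω(c₃,c₄) = n > 0, with Auroux invariants k₁ and k₂ respectively. Then there exists A ∈ SL(2,ℤ) with A·c₁ = c₃ and A·c₂ = c₄ if and only if k₁ ≡ k₂ (mod n). -/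
/-- The action of `SL(2, ℤ)` on `ℤ × ℤ` by matrix multiplication. -/
def SL2act (A : Matrix.SpecialLinearGroup (Fin 2) ℤ) (c : ℤ × ℤ) : ℤ × ℤ :=
  (A.1 0 0 * c.1 + A.1 0 1 * c.2, A.1 1 0 * c.1 + A.1 1 1 * c.2)

theorem sl2_orbit_iff_same_auroux_invariant
    (c₁ c₂ c₃ c₄ : ℤ × ℤ)
    (hc₁ : Primitive c₁) (hc₂ : Primitive c₂) (hc₃ : Primitive c₃) (hc₄ : Primitive c₄)
    (n : ℤ) (hn : 0 < n) (hω₁ : ω c₁ c₂ = n) (hω₂ : ω c₃ c₄ = n)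
    (k₁ k₂ : ℤ) (hk₁ : AurouxInv c₁ c₂ n k₁) (hk₂ : AurouxInv c₃ c₄ n k₂) :
    (∃ A : Matrix.SpecialLinearGroup (Fin 2) ℤ, SL2act A c₁ = c₃ ∧ SL2act A c₂ = c₄) ↔
      k₁ ≡ k₂ [ZMOD n] := by
  obtain ⟨u, v, huv, hc1, hc2⟩ := hk₁
  obtain ⟨p, q, hpq, hc3, hc4⟩ := hk₂
  have huv' : u.1 * v.2 - u.2 * v.1 = 1 := huv
  have hpq' : p.1 * q.2 - p.2 * q.1 = 1 := hpq
  subst hc1 hc2 hc3 hc4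
  constructor
  · rintro ⟨A, hA1, hA2⟩
    set a := A.1 0 0 with ha
    set b := A.1 0 1 with hb
    set c := A.1 1 0 with hc
    set d := A.1 1 1 with hd
    rw [Prod.ext_iff] at hA1 hA2
    simp only [SL2act, Prod.fst_add, Prod.snd_add, Prod.smul_fst, Prod.smul_snd,
      smul_eq_mul] at hA1 hA2
    obtain ⟨e1, e2⟩ := hA1
    obtain ⟨f1, f2⟩ := hA2
    rw [Int.modEq_iff_dvd]
    exact ⟨(a*v.1+b*v.2)*q.2 - (c*v.1+d*v.2)*q.1, by
      linear_combination -q.2*f1 + q.1*f2 + k₁*q.2*e1 - k₁*q.1*e2 - (k₂ - k₁)*hpq'⟩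
  · intro h
    obtain ⟨t, ht⟩ := Int.modEq_iff_dvd.mp h
    set x1 := q.1 + t*c₃.1 with hx1
    set x2 := q.2 + t*c₃.2 with hx2
    refine ⟨⟨!![c₃.1*v.2 - x1*c₁.2, -(c₃.1*v.1) + x1*c₁.1;
               c₃.2*v.2 - x2*c₁.2, -(c₃.2*v.1) + x2*c₁.1], ?_⟩, ?_, ?_⟩
    · rw [Matrix.det_fin_two_of]
      linear_combination (c₃.1*x2 - c₃.2*x1)*huv' + hpq'
    · simp only [SL2act, Matrix.cons_val_zero, Matrix.cons_val_one, Matrix.head_cons,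
        Matrix.cons_val', Matrix.head_fin_const, Matrix.empty_val', Matrix.cons_val_fin_one,
        Matrix.of_apply, Prod.ext_iff]
      constructor
      · linear_combination c₃.1*huv'
      · linear_combination c₃.2*huv'
    · simp only [SL2act, Matrix.cons_val_zero, Matrix.cons_val_one, Matrix.head_cons,
        Matrix.cons_val', Matrix.head_fin_const, Matrix.empty_val', Matrix.cons_val_fin_one,
        Matrix.of_apply, Prod.ext_iff, Prod.fst_add, Prod.snd_add, Prod.smul_fst,
        Prod.smul_snd, smul_eq_mul]
      constructor
      · linear_combination (n*x1 + k₁*c₃.1)*huv' - c₃.1*ht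
      · linear_combination (n*x2 + k₁*c₃.2)*huv' - c₃.2*ht
end

section
/- Let n be a positive integer and let P_n be the set of pairs (c₁,c₂) of primitive vectors in ℤ² with ω(c₁,c₂) = n. Then the number N of equivalence classes of P_n under the equivalence relation generated by the diagonal SL(2,ℤ) action and the braid move satisfies 2·N = φ(n) + ψ(n)·∏_{p odd prime, p ∣ n} (1 + (−1)^{(p−1)/2}). In particular, this is the number of topological equivalence classes of genus-1 Lefschetz fibrations over the disc with 2 singular fibers of type I₁ whose vanishing cycles have algebraic intersection number n. -/
/-- One elementary move on pairs of vectors: either the diagonal `SL(2,ℤ)` action or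
the braid (Hurwitz) move `(c₁, c₂) ↦ (-(c₂ + n • c₁), c₁)`. -/
inductive Move (n : ℤ) : (ℤ × ℤ) × (ℤ × ℤ) → (ℤ × ℤ) × (ℤ × ℤ) → Prop
  | sl2 (A : Matrix.SpecialLinearGroup (Fin 2) ℤ) (p : (ℤ × ℤ) × (ℤ × ℤ)) :
      Move n p (SL2act A p.1, SL2act A p.2)
  | braid (p : (ℤ × ℤ) × (ℤ × ℤ)) : Move n p (-(p.2 + n • p.1), p.1)


noncomputable def sqneg (m : ℕ) : ℕ := Nat.card {x : ZMod m // x * x = -1}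

open Finset

/-- number of square roots of -1 mod m -/

lemma sqneg_mul {a b : ℕ} (h : Nat.Coprime a b) : sqneg (a * b) = sqneg a * sqneg b := by
  unfold sqneg
  rw [← Nat.card_prod]
  apply Nat.card_congr
  refine ((Equiv.subtypeEquiv (q := fun p : ZMod a × ZMod b => p * p = -1) (ZMod.chineseRemainder h).toEquiv (fun x => ?_)).trans
    ((Equiv.subtypeEquivRight (p := fun p : ZMod a × ZMod b => p * p = -1) (fun p => ?_)).trans
      (Equiv.subtypeProdEquivProd (p := fun y : ZMod a => y * y = -1)
        (q := fun z : ZMod b => z * z = -1))))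
  · constructor
    · intro hx
      have : (ZMod.chineseRemainder h) (x * x) = (ZMod.chineseRemainder h) (-1) := by rw [hx]
      simpa [map_mul, map_neg, map_one] using this
    · intro hx
      have : (ZMod.chineseRemainder h) (x*x) = (ZMod.chineseRemainder h) (-1) := by
        simp only [map_mul, map_neg, map_one]
        exact hx
      exact (ZMod.chineseRemainder h).injective this
  · constructor
    · intro hp
      constructor
      · have := congrArg Prod.fst hp; simpa using this
      · have := congrArg Prod.snd hp; simpa using this
    · rintro ⟨h1, h2⟩
      ext <;> simpa

lemma sqneg_two : sqneg 2 = 1 := by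
  rw [sqneg, Nat.card_eq_fintype_card]
  decide

lemma sqneg_four_dvd {m : ℕ} (h : (4:ℕ) ∣ m) : sqneg m = 0 := by
  rw [sqneg]
  have : IsEmpty {x : ZMod m // x * x = -1} := by
    constructor
    rintro ⟨x, hx⟩
    have h4 : ∀ y : ZMod 4, y * y ≠ -1 := by decide
    apply h4 (ZMod.castHom h (ZMod 4) x)
    rw [← map_mul]
    rw [hx, map_neg, map_one]
  simp [Nat.card_of_isEmpty]

lemma sqneg_odd_prime {p : ℕ} (hp : p.Prime) (hp2 : p ≠ 2) :
    (sqneg p : ℤ) = 1 + (-1 : ℤ) ^ ((p - 1) / 2) := by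
  haveI : Fact p.Prime := ⟨hp⟩
  have h := legendreSym.card_sqrts (p := p) hp2 (-1)
  have hodd : p % 2 = 1 := Nat.odd_iff.mp (hp.odd_of_ne_two hp2)
  rw [legendreSym.at_neg_one hp2, ZMod.χ₄_eq_neg_one_pow hodd] at h
  have hcard : sqneg p = {x : ZMod p | x ^ 2 = ((-1 : ℤ) : ZMod p)}.toFinset.card := by
    rw [sqneg]
    rw [Nat.card_eq_fintype_card]
    rw [Set.toFinset_card]
    apply Fintype.card_congr
    apply Equiv.subtypeEquivRight
    intro x
    push_cast
    simp [sq]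
  rw [hcard, h]
  have : (p - 1) / 2 = p / 2 := by omega
  rw [this]
  ring

lemma sqneg_lift {p : ℕ} (hp : p.Prime) (hp2 : p ≠ 2) (k : ℕ) (hk : 1 ≤ k) :
    sqneg (p ^ (k + 1)) = sqneg (p ^ k) := by
  haveI : Fact p.Prime := ⟨hp⟩
  have hdvd : p ^ k ∣ p ^ (k+1) := pow_dvd_pow p (Nat.le_succ k)
  have hppos : 0 < p := hp.pos
  haveI : NeZero (p ^ (k+1)) := ⟨pow_ne_zero _ hp.ne_zero⟩
  haveI : NeZero (p ^ k) := ⟨pow_ne_zero _ hp.ne_zero⟩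
  set π := ZMod.castHom hdvd (ZMod (p ^ k)) with hπ
  -- the map between solution sets
  have hmap : ∀ x : ZMod (p^(k+1)), x * x = -1 → (π x) * (π x) = -1 := by
    intro x hx
    rw [← map_mul, hx, map_neg, map_one]
  set f : {x : ZMod (p^(k+1)) // x * x = -1} → {y : ZMod (p^k) // y * y = -1} :=
    fun x => ⟨π x.1, hmap x.1 x.2⟩ with hf
  have hinj : Function.Injective f := by
    rintro ⟨x, hx⟩ ⟨x', hx'⟩ hxx
    have hcast : π x = π x' := congrArg Subtype.val hxx
    -- δ := x' - x is nilpotent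
    have hδ : π (x' - x) = 0 := by rw [map_sub, hcast, sub_self]
    have hdvdval : p ^ k ∣ (x' - x).val := by
      have : ((( x' - x).val : ℕ) : ZMod (p ^ k)) = 0 := by
        rw [← map_natCast π ((x' - x).val), ZMod.natCast_val, ZMod.cast_id]
        exact hδ
      exact (ZMod.natCast_eq_zero_iff _ _).mp this
    have hsq0 : (x' - x) * (x' - x) = 0 := by
      have h1 : ((p:ℕ) ^ (k+1) : ℕ) ∣ (x' - x).val * (x' - x).val := by
        calc (p ^ (k+1) : ℕ) ∣ p ^ k * p ^ k := by
              rw [← pow_add]; exact pow_dvd_pow p (by omega)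
          _ ∣ _ := mul_dvd_mul hdvdval hdvdval
      have : (((x' - x).val * (x' - x).val : ℕ) : ZMod (p^(k+1))) = 0 :=
        (ZMod.natCast_eq_zero_iff _ _).mpr h1
      rwa [Nat.cast_mul, ZMod.natCast_val, ZMod.cast_id] at this
    -- x + x' is a unit
    have hxunit : IsUnit x := IsUnit.of_mul_eq_one (-x) (by rw [mul_neg, hx, neg_neg])
    have h2unit : IsUnit (2 : ZMod (p^(k+1))) := by
      rw [show ((2 : ZMod (p^(k+1)))) = ((2:ℕ) : ZMod (p^(k+1))) by push_cast; ring]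
      rw [ZMod.isUnit_iff_coprime]
      have : ¬ (2 ∣ p ^ (k+1)) := by
        intro h2
        have := (Nat.prime_two.dvd_of_dvd_pow h2)
        exact hp2 ((Nat.prime_dvd_prime_iff_eq Nat.prime_two hp).mp this).symm
      rcases Nat.coprime_or_dvd_of_prime Nat.prime_two (p^(k+1)) with hc | hc
      · exact hc
      · exact absurd hc this
    have hsum : IsUnit (x + x') := by
      have : x + x' = 2 * x + (x' - x) := by ring
      rw [this]
      refine IsNilpotent.isUnit_add_left_of_commute ⟨2, ?_⟩ (h2unit.mul hxunit) (Commute.all _ _)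
      rw [sq]; exact hsq0
    have hzero : (x' - x) * (x + x') = 0 := by
      have : (x' - x) * (x + x') = x' * x' - x * x := by ring
      rw [this, hx, hx', sub_self]
    have : x' - x = 0 := (hsum.mul_left_eq_zero).mp hzero
    exact Subtype.ext (sub_eq_zero.mp this).symm
  have hsurj : Function.Surjective f := by
    rintro ⟨y, hy⟩
    set a := y.val with ha
    -- p^k ∣ a² + 1
    have hdvd1 : (p ^ k : ℕ) ∣ a * a + 1 := by
      have : ((a * a + 1 : ℕ) : ZMod (p^k)) = 0 := by
        push_cast
        rw [ZMod.natCast_val, ZMod.cast_id, hy]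
        ring
      exact (ZMod.natCast_eq_zero_iff _ _).mp this
    obtain ⟨s, hs⟩ := hdvd1
    -- p ∤ a
    have hpa : ¬ ((p:ℕ) ∣ a) := by
      intro hdp
      have h1 : (p:ℕ) ∣ a * a + 1 := by
        rw [hs]; exact Dvd.dvd.mul_right (dvd_pow_self p (by omega)) s
      have : (p:ℕ) ∣ 1 := (Nat.dvd_add_right (hdp.mul_left a)).mp h1
      exact hp.one_lt.ne' (Nat.dvd_one.mp this)
    -- 2a invertible mod p
    have h2a : ((2 * a : ℕ) : ZMod p) ≠ 0 := by
      rw [Ne, ZMod.natCast_eq_zero_iff]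
      intro h
      rcases (Nat.Prime.dvd_mul hp).mp h with h | h
      · exact hp2 ((Nat.prime_dvd_prime_iff_eq hp Nat.prime_two).mp h)
      · exact hpa h
    set b : ZMod p := (-(s : ZMod p)) * ((2 * a : ℕ) : ZMod p)⁻¹ with hb
    set t := b.val with ht
    -- key divisibility: p ∣ s + 2*t*a + t*t*p^k
    have hkey : (p : ℕ) ∣ s + 2 * t * a + t * t * p ^ k := by
      have : ((s + 2 * t * a + t * t * p ^ k : ℕ) : ZMod p) = 0 := by
        push_cast
        rw [ZMod.natCast_val, ZMod.cast_id]
        have hpk : ((p : ZMod p) ^ k) = 0 := by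
          rw [ZMod.natCast_self, zero_pow (by omega)]
        rw [hpk, mul_zero, add_zero]
        have hmul : b * ((2 * a : ℕ) : ZMod p) = -(s : ZMod p) := by
          rw [hb, mul_assoc, inv_mul_cancel₀ h2a, mul_one]
        push_cast at hmul
        linear_combination hmul
      exact (ZMod.natCast_eq_zero_iff _ _).mp this
    -- the lift
    refine ⟨⟨((a + t * p ^ k : ℕ) : ZMod (p ^ (k+1))), ?_⟩, ?_⟩
    · -- x * x = -1
      have hdvd2 : (p ^ (k+1) : ℕ) ∣ (a + t * p^k) * (a + t * p^k) + 1 := by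
        obtain ⟨c, hc⟩ := hkey
        have : (a + t * p^k) * (a + t * p^k) + 1 = p ^ k * (s + 2*t*a + t*t*p^k) := by
          have expand : (a + t * p^k) * (a + t * p^k) + 1
              = (a * a + 1) + (2 * t * a) * p ^ k + (t * t * p^k) * p ^ k := by ring
          rw [expand, hs]; ring
        rw [this, hc, pow_succ]
        exact ⟨c, by ring⟩
      have : (((a + t * p^k) * (a + t * p^k) + 1 : ℕ) : ZMod (p^(k+1))) = 0 :=
        (ZMod.natCast_eq_zero_iff _ _).mpr hdvd2
      push_cast at this ⊢
      linear_combination this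
    · -- f of it is y
      apply Subtype.ext
      show π _ = y
      rw [map_natCast]
      push_cast
      rw [show ((p:ZMod (p^k)) ^ k) = 0 by
        rw [← Nat.cast_pow, ZMod.natCast_self], mul_zero, add_zero,
        ZMod.natCast_val, ZMod.cast_id]
  unfold sqneg
  exact Nat.card_eq_of_bijective f ⟨hinj, hsurj⟩

lemma sqneg_odd_prime_pow {p : ℕ} (hp : p.Prime) (hp2 : p ≠ 2) {k : ℕ} (hk : 1 ≤ k) :
    (sqneg (p ^ k) : ℤ) = 1 + (-1 : ℤ) ^ ((p - 1) / 2) := by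
  induction k with
  | zero => omega
  | succ k ih =>
    rcases Nat.eq_or_lt_of_le hk with h | h
    · rw [← h, pow_one]; exact sqneg_odd_prime hp hp2
    · have hk1 : 1 ≤ k := by omega
      rw [sqneg_lift hp hp2 k hk1]; exact ih hk1

lemma four_dvd_mul_iff {a b : ℕ} (h : Nat.Coprime a b) : (4 ∣ a * b) ↔ (4 ∣ a ∨ 4 ∣ b) := by
  constructor
  · intro h4
    by_cases h2 : 2 ∣ a
    · left
      have hob : ¬ (2 ∣ b) := by
        intro h2b
        have h2g : (2:ℕ) ∣ Nat.gcd a b := Nat.dvd_gcd h2 h2b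
        rw [Nat.Coprime] at h
        omega
      have hcop : Nat.Coprime 4 b := by
        have : Nat.Coprime 2 b := Nat.Prime.coprime_iff_not_dvd Nat.prime_two |>.mpr hob
        simpa using Nat.Coprime.pow_left 2 this
      exact (Nat.Coprime.dvd_of_dvd_mul_right hcop) h4
    · right
      have hcop : Nat.Coprime 4 a := by
        have : Nat.Coprime 2 a := Nat.Prime.coprime_iff_not_dvd Nat.prime_two |>.mpr h2
        simpa using Nat.Coprime.pow_left 2 this
      exact (Nat.Coprime.dvd_of_dvd_mul_left hcop) h4
  · rintro (h | h)
    · exact h.mul_right b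
    · exact h.mul_left a

lemma sqneg_eq (n : ℕ) (hn : 0 < n) :
    (sqneg n : ℤ) = (if 4 ∣ n then 0 else 1) *
      ∏ p ∈ n.primeFactors.erase 2, (1 + (-1 : ℤ) ^ ((p - 1) / 2)) := by
  induction n using Nat.recOnPosPrimePosCoprime with
  | prime_pow p k hp hk =>
    have hpp : p.Prime := hp
    rw [Nat.primeFactors_prime_pow (by omega) hpp]
    by_cases hp2 : p = 2
    · subst hp2
      rw [Finset.erase_singleton, Finset.prod_empty, mul_one]
      rcases Nat.eq_or_lt_of_le hk with h1 | h1
      · rw [← h1, pow_one, sqneg_two]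
        norm_num
      · have h4 : (4:ℕ) ∣ 2 ^ k := by
          have : (2:ℕ)^2 ∣ 2^k := pow_dvd_pow 2 (by omega)
          simpa using this
        rw [sqneg_four_dvd h4, if_pos h4]
        norm_num
    · rw [Finset.erase_eq_of_notMem (by simp only [Finset.mem_singleton]; exact fun h => hp2 h.symm)]
      have h4 : ¬ ((4:ℕ) ∣ p ^ k) := by
        intro h4
        have h2 : (2:ℕ) ∣ p ^ k := dvd_trans (by norm_num) h4
        have := (Nat.Prime.dvd_of_dvd_pow Nat.prime_two h2)
        exact hp2 ((Nat.prime_dvd_prime_iff_eq Nat.prime_two hpp).mp this).symm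
      rw [if_neg h4, Finset.prod_singleton, one_mul]
      exact sqneg_odd_prime_pow hpp hp2 hk
  | zero => omega
  | one =>
    have h1 : sqneg 1 = 1 := by rw [sqneg, Nat.card_eq_fintype_card]; decide
    norm_num [h1]
  | coprime a b ha hb hab iha ihb =>
    rw [sqneg_mul hab]
    push_cast
    rw [iha (by omega), ihb (by omega)]
    rw [Nat.Coprime.primeFactors_mul hab, Finset.erase_union_distrib]
    rw [Finset.prod_union (Finset.disjoint_of_subset_left (Finset.erase_subset _ _)
      (Finset.disjoint_of_subset_right (Finset.erase_subset _ _) hab.disjoint_primeFactors))]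
    have hiff := four_dvd_mul_iff hab
    have hif : (if 4 ∣ a * b then (0:ℤ) else 1) =
        (if 4 ∣ a then (0:ℤ) else 1) * (if 4 ∣ b then (0:ℤ) else 1) := by
      by_cases h4a : 4 ∣ a <;> by_cases h4b : 4 ∣ b <;>
        simp [h4a, h4b, hiff]
    rw [hif]
    ring


section D
variable (n : ℕ)

lemma negInv_negInv (u : (ZMod n)ˣ) : -(-u⁻¹)⁻¹ = u := by
  simp

/-- setoid on units: u ~ v iff v = u or v = -u⁻¹ -/
def negInvSetoid : Setoid (ZMod n)ˣ :=
  ⟨fun u v => v = u ∨ v = -u⁻¹, by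
    constructor
    · intro u; exact Or.inl rfl
    · rintro u v (rfl | rfl)
      · exact Or.inl rfl
      · right; rw [negInv_negInv]
    · rintro u v w (rfl | rfl) (rfl | rfl)
      · exact Or.inl rfl
      · exact Or.inr rfl
      · exact Or.inr rfl
      · left; rw [negInv_negInv]⟩

instance : DecidableRel (negInvSetoid n).r := fun u v =>
  inferInstanceAs (Decidable (_ ∨ _))

lemma fixed_equiv [NeZero n] :
    Nat.card {u : (ZMod n)ˣ // -u⁻¹ = u} = sqneg n := by
  rw [sqneg]
  apply Nat.card_congr
  refine ⟨fun u => ⟨(u.1 : ZMod n), ?_⟩, fun x => ⟨⟨x.1, -x.1,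
    by rw [mul_neg, x.2, neg_neg], by rw [neg_mul, x.2, neg_neg]⟩, ?_⟩, ?_, ?_⟩
  · obtain ⟨u, hu⟩ := u
    have h : u * u = (-1 : (ZMod n)ˣ) := by
      nth_rewrite 1 [← hu]
      simp
    have := congrArg Units.val h
    simpa using this
  · apply Units.ext
    rw [Units.inv_mk]
    simp
  · rintro ⟨u, hu⟩
    exact Subtype.ext (Units.ext rfl)
  · rintro ⟨x, hx⟩
    exact Subtype.ext rfl

end D

open Finset in
lemma two_mul_card_quot (n : ℕ) [NeZero n] :
    2 * Nat.card (Quotient (negInvSetoid n)) = n.totient + sqneg n := by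
  classical
  set s := negInvSetoid n with hs
  have hfiber : ∀ u : (ZMod n)ˣ,
      (univ.filter (fun v => Quotient.mk s v = Quotient.mk s u)) = {u, -u⁻¹} := by
    intro u
    ext v
    simp only [mem_filter, mem_univ, true_and, mem_insert, mem_singleton, Quotient.eq]
    constructor
    · rintro (rfl | rfl)
      · exact Or.inl rfl
      · right; rw [negInv_negInv]
    · rintro (rfl | rfl)
      · exact Or.inl rfl
      · right; rw [negInv_negInv]
  have key : ∀ q : Quotient s,
      (univ.filter (fun u => Quotient.mk s u = q)).card
        + ((univ.filter (fun u : (ZMod n)ˣ => -u⁻¹ = u)).filter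
            (fun u => Quotient.mk s u = q)).card = 2 := by
    intro q
    induction q using Quotient.inductionOn with
    | h u =>
      rw [filter_filter, hfiber u]
      have hsub : (univ.filter (fun v : (ZMod n)ˣ => -v⁻¹ = v ∧ Quotient.mk s v = Quotient.mk s u))
          = if -u⁻¹ = u then {u} else ∅ := by
        ext v
        simp only [mem_filter, mem_univ, true_and, Quotient.eq]
        by_cases hfix : -u⁻¹ = u
        · simp only [if_pos hfix, mem_singleton]
          constructor
          · rintro ⟨hv, (rfl | rfl)⟩
            · rfl
            · rw [← hfix, negInv_negInv]
          · rintro rfl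
            exact ⟨hfix, Or.inl rfl⟩
        · simp only [if_neg hfix, notMem_empty, iff_false]
          rintro ⟨hv, (rfl | rfl)⟩
          · exact hfix hv
          · apply hfix
            rw [negInv_negInv]
            exact hv.symm
      rw [hsub]
      by_cases hfix : -u⁻¹ = u
      · rw [if_pos hfix, hfix]
        simp
      · rw [if_neg hfix]
        rw [card_insert_of_notMem (by simp [Ne, eq_comm]; exact fun h => hfix h.symm ), card_singleton]
        simp
  have h1 : Fintype.card (ZMod n)ˣ
      = ∑ q : Quotient s, (univ.filter (fun u => Quotient.mk s u = q)).card := by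
    rw [← card_univ]
    exact card_eq_sum_card_fiberwise (fun x _ => mem_univ _)
  have h2 : (univ.filter (fun u : (ZMod n)ˣ => -u⁻¹ = u)).card
      = ∑ q : Quotient s, ((univ.filter (fun u : (ZMod n)ˣ => -u⁻¹ = u)).filter
          (fun u => Quotient.mk s u = q)).card :=
    card_eq_sum_card_fiberwise (fun x _ => mem_univ _)
  have hfix : (univ.filter (fun u : (ZMod n)ˣ => -u⁻¹ = u)).card = sqneg n := by
    rw [← fixed_equiv n, Nat.card_eq_fintype_card, Fintype.card_subtype]
  have htot : Fintype.card (ZMod n)ˣ = n.totient := ZMod.card_units_eq_totient n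
  have hsum : Fintype.card (ZMod n)ˣ + (univ.filter (fun u : (ZMod n)ˣ => -u⁻¹ = u)).card
      = 2 * Fintype.card (Quotient s) := by
    rw [h1, h2, ← Finset.sum_add_distrib]
    rw [Finset.sum_congr rfl (fun q _ => key q)]
    rw [Finset.sum_const, card_univ, smul_eq_mul, mul_comm]
  rw [Nat.card_eq_fintype_card, ← hsum, htot, hfix]

-- ### SL2 basics

lemma SL2_det (A : Matrix.SpecialLinearGroup (Fin 2) ℤ) :
    A.1 0 0 * A.1 1 1 - A.1 0 1 * A.1 1 0 = 1 := by
  have := A.2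
  rwa [Matrix.det_fin_two] at this

lemma omega_SL2 (A : Matrix.SpecialLinearGroup (Fin 2) ℤ) (x y : ℤ × ℤ) :
    ω (SL2act A x) (SL2act A y) = ω x y := by
  simp only [ω, SL2act]
  linear_combination (x.1 * y.2 - x.2 * y.1) * SL2_det A

lemma prim_SL2 (A : Matrix.SpecialLinearGroup (Fin 2) ℤ) {c : ℤ × ℤ} (h : Primitive c) :
    Primitive (SL2act A c) := by
  obtain ⟨u, v, huv⟩ := h
  exact ⟨u * A.1 1 1 - v * A.1 1 0, -(u * A.1 0 1) + v * A.1 0 0, by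
    simp only [SL2act]
    linear_combination (u * c.1 + v * c.2) * SL2_det A + huv⟩

/-- explicit SL2 element -/
def mkSL (a b c d : ℤ) (h : a * d - b * c = 1) : Matrix.SpecialLinearGroup (Fin 2) ℤ :=
  ⟨!![a, b; c, d], by rw [Matrix.det_fin_two_of]; exact h⟩

lemma mkSL_act (a b c d : ℤ) (h : a * d - b * c = 1) (v : ℤ × ℤ) :
    SL2act (mkSL a b c d h) v = (a * v.1 + b * v.2, c * v.1 + d * v.2) := by
  simp [SL2act, mkSL]

-- ### moves preserve the conditions

lemma move_mem {ν : ℤ} {p q : (ℤ × ℤ) × (ℤ × ℤ)}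
    (hp : Primitive p.1 ∧ Primitive p.2 ∧ ω p.1 p.2 = ν) (h : Move ν p q) :
    Primitive q.1 ∧ Primitive q.2 ∧ ω q.1 q.2 = ν := by
  obtain ⟨hp1, hp2, hω⟩ := hp
  cases h with
  | sl2 A p =>
    exact ⟨prim_SL2 A hp1, prim_SL2 A hp2, by rw [omega_SL2]; exact hω⟩
  | braid p =>
    refine ⟨?_, hp1, ?_⟩
    · have key : SL2act (mkSL (p.1.1 * p.1.2 - 1) (-(p.1.1 * p.1.1)) (p.1.2 * p.1.2)
          (-1 - p.1.1 * p.1.2) (by ring)) p.2 = -(p.2 + ν • p.1) := by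
        rw [mkSL_act]
        have h1 : (-(p.2 + ν • p.1)).1 = -(p.2.1 + ν * p.1.1) := by simp [smul_eq_mul]
        have h2 : (-(p.2 + ν • p.1)).2 = -(p.2.2 + ν * p.1.2) := by simp [smul_eq_mul]
        apply Prod.ext
        · rw [h1]; simp only [ω] at hω; linear_combination (-p.1.1) * hω
        · rw [h2]; simp only [ω] at hω; linear_combination (-p.1.2) * hω
      rw [← key]
      exact prim_SL2 _ hp2
    · show ω (-(p.2 + ν • p.1)) p.1 = ν
      simp only [ω, Prod.fst_neg, Prod.snd_neg, Prod.fst_add, Prod.snd_add,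
        Prod.smul_fst, Prod.smul_snd, smul_eq_mul]
      simp only [ω] at hω
      linear_combination hω

-- ### the invariant in (ZMod n)ˣ

section Inv
variable (n : ℕ)

/-- the characterizing property of the invariant -/
def χ (p : (ℤ × ℤ) × (ℤ × ℤ)) (x : ZMod n) : Prop :=
  ((p.1.1 : ℤ) : ZMod n) * x = ((p.2.1 : ℤ) : ZMod n) ∧
  ((p.1.2 : ℤ) : ZMod n) * x = ((p.2.2 : ℤ) : ZMod n)

/-- a concrete representative -/
def inv1 (p : (ℤ × ℤ) × (ℤ × ℤ)) : ZMod n :=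
  ((Int.gcdA p.1.1 p.1.2 * p.2.1 + Int.gcdB p.1.1 p.1.2 * p.2.2 : ℤ) : ZMod n)

variable {n}

lemma bezout_of_prim {c : ℤ × ℤ} (h : Primitive c) :
    c.1 * Int.gcdA c.1 c.2 + c.2 * Int.gcdB c.1 c.2 = 1 := by
  have hg : Int.gcd c.1 c.2 = 1 := Int.isCoprime_iff_gcd_eq_one.mp h
  have := Int.gcd_eq_gcd_ab c.1 c.2
  rw [hg] at this
  exact_mod_cast this.symm

lemma inv1_char {p : (ℤ × ℤ) × (ℤ × ℤ)} (hp1 : Primitive p.1) (hω : ω p.1 p.2 = (n : ℤ)) :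
    χ n p (inv1 n p) := by
  have hst := bezout_of_prim hp1
  simp only [ω] at hω
  have hn0 : (((n : ℤ)) : ZMod n) = 0 := by push_cast; exact ZMod.natCast_self n
  constructor
  · have h1 : p.1.1 * (Int.gcdA p.1.1 p.1.2 * p.2.1 + Int.gcdB p.1.1 p.1.2 * p.2.2) - p.2.1
        = Int.gcdB p.1.1 p.1.2 * (n : ℤ) := by
      linear_combination p.2.1 * hst + Int.gcdB p.1.1 p.1.2 * hω
    show _ * inv1 n p = _
    rw [inv1, ← Int.cast_mul, ← sub_eq_zero, ← Int.cast_sub, h1]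
    push_cast
    rw [ZMod.natCast_self, mul_zero]
  · have h1 : p.1.2 * (Int.gcdA p.1.1 p.1.2 * p.2.1 + Int.gcdB p.1.1 p.1.2 * p.2.2) - p.2.2
        = -(Int.gcdA p.1.1 p.1.2) * (n : ℤ) := by
      linear_combination p.2.2 * hst - Int.gcdA p.1.1 p.1.2 * hω
    show _ * inv1 n p = _
    rw [inv1, ← Int.cast_mul, ← sub_eq_zero, ← Int.cast_sub, h1]
    push_cast
    rw [ZMod.natCast_self, mul_zero]

lemma char_unique {p : (ℤ × ℤ) × (ℤ × ℤ)} (hp1 : Primitive p.1) {x y : ZMod n}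
    (hx : χ n p x) (hy : χ n p y) : x = y := by
  have hst := bezout_of_prim hp1
  have h1 : ((p.1.1 * Int.gcdA p.1.1 p.1.2 + p.1.2 * Int.gcdB p.1.1 p.1.2 : ℤ) : ZMod n)
      = 1 := by rw [hst]; simp
  calc x = ((p.1.1 * Int.gcdA p.1.1 p.1.2 + p.1.2 * Int.gcdB p.1.1 p.1.2 : ℤ) : ZMod n) * x := by
        rw [h1, one_mul]
    _ = ((Int.gcdA p.1.1 p.1.2 : ℤ) : ZMod n) * (((p.1.1 : ℤ) : ZMod n) * x)
        + ((Int.gcdB p.1.1 p.1.2 : ℤ) : ZMod n) * (((p.1.2 : ℤ) : ZMod n) * x) := by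
        push_cast; ring
    _ = ((Int.gcdA p.1.1 p.1.2 : ℤ) : ZMod n) * (((p.1.1 : ℤ) : ZMod n) * y)
        + ((Int.gcdB p.1.1 p.1.2 : ℤ) : ZMod n) * (((p.1.2 : ℤ) : ZMod n) * y) := by
        rw [hx.1, hx.2, hy.1, hy.2]
    _ = ((p.1.1 * Int.gcdA p.1.1 p.1.2 + p.1.2 * Int.gcdB p.1.1 p.1.2 : ℤ) : ZMod n) * y := by
        push_cast; ring
    _ = y := by rw [h1, one_mul]

lemma char_isUnit {p : (ℤ × ℤ) × (ℤ × ℤ)} (hp2 : Primitive p.2) {x : ZMod n}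
    (hx : χ n p x) : IsUnit x := by
  obtain ⟨u, v, huv⟩ := hp2
  apply IsUnit.of_mul_eq_one (((u * p.1.1 + v * p.1.2 : ℤ)) : ZMod n)
  have hc := congrArg (fun z : ℤ => ((z : ZMod n))) huv
  push_cast at hc ⊢
  linear_combination ((u : ℤ) : ZMod n) * hx.1 + ((v : ℤ) : ZMod n) * hx.2 + hc

lemma char_sl2 (A : Matrix.SpecialLinearGroup (Fin 2) ℤ) {p : (ℤ × ℤ) × (ℤ × ℤ)}
    {x : ZMod n} (hx : χ n p x) : χ n (SL2act A p.1, SL2act A p.2) x := by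
  obtain ⟨h1, h2⟩ := hx
  constructor
  · show ((( A.1 0 0 * p.1.1 + A.1 0 1 * p.1.2 : ℤ)) : ZMod n) * x
        = (((A.1 0 0 * p.2.1 + A.1 0 1 * p.2.2 : ℤ)) : ZMod n)
    push_cast
    push_cast at h1 h2
    linear_combination ((A.1 0 0 : ℤ) : ZMod n) * h1 + ((A.1 0 1 : ℤ) : ZMod n) * h2
  · show ((( A.1 1 0 * p.1.1 + A.1 1 1 * p.1.2 : ℤ)) : ZMod n) * x
        = (((A.1 1 0 * p.2.1 + A.1 1 1 * p.2.2 : ℤ)) : ZMod n)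
    push_cast
    push_cast at h1 h2
    linear_combination ((A.1 1 0 : ℤ) : ZMod n) * h1 + ((A.1 1 1 : ℤ) : ZMod n) * h2

lemma char_braid {p : (ℤ × ℤ) × (ℤ × ℤ)} {u : (ZMod n)ˣ} (hx : χ n p (u : ZMod n)) :
    χ n (-(p.2 + (n : ℤ) • p.1), p.1) ((-u⁻¹ : (ZMod n)ˣ) : ZMod n) := by
  obtain ⟨h1, h2⟩ := hx
  have hui : (u : ZMod n) * ((u⁻¹ : (ZMod n)ˣ) : ZMod n) = 1 := u.mul_inv
  have hn0 : ((n : ℕ) : ZMod n) = 0 := ZMod.natCast_self n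
  constructor
  · show (((-(p.2.1 + (n : ℤ) * p.1.1) : ℤ)) : ZMod n) * _ = ((p.1.1 : ℤ) : ZMod n)
    push_cast
    push_cast at h1
    linear_combination (-((u⁻¹ : (ZMod n)ˣ) : ZMod n)) * h1
      + ((p.1.1 : ℤ) : ZMod n) * hui
      + (((p.1.1 : ℤ) : ZMod n) * ((u⁻¹ : (ZMod n)ˣ) : ZMod n)) * hn0
  · show (((-(p.2.2 + (n : ℤ) * p.1.2) : ℤ)) : ZMod n) * _ = ((p.1.2 : ℤ) : ZMod n)
    push_cast
    push_cast at h2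
    linear_combination (-((u⁻¹ : (ZMod n)ˣ) : ZMod n)) * h2
      + ((p.1.2 : ℤ) : ZMod n) * hui
      + (((p.1.2 : ℤ) : ZMod n) * ((u⁻¹ : (ZMod n)ˣ) : ZMod n)) * hn0

end Inv

-- ### the subtype of admissible pairs and the classification

section Main
variable (n : ℕ) [NeZero n]

abbrev SS := {p : (ℤ × ℤ) × (ℤ × ℤ) //
  Primitive p.1 ∧ Primitive p.2 ∧ ω p.1 p.2 = (n : ℤ)}

abbrev RR : SS n → SS n → Prop := fun p q => Move (n : ℤ) p.1 q.1

noncomputable def theUnit (p : SS n) : (ZMod n)ˣ :=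
  (char_isUnit p.2.2.1 (inv1_char p.2.1 p.2.2.2)).unit

lemma theUnit_char (p : SS n) : χ n p.1 ((theUnit n p : (ZMod n)ˣ) : ZMod n) := by
  rw [theUnit, IsUnit.unit_spec]
  exact inv1_char p.2.1 p.2.2.2

def std (u : (ZMod n)ˣ) : SS n :=
  ⟨((1, 0), ((((u : ZMod n).val : ℕ) : ℤ), (n : ℤ))), by
    refine ⟨isCoprime_one_left, ?_, by simp [ω]⟩
    exact Nat.isCoprime_iff_coprime.mpr (ZMod.val_coe_unit_coprime u)⟩

lemma std_char (u : (ZMod n)ˣ) : χ n (std n u).1 (u : ZMod n) := by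
  constructor
  · show ((1 : ℤ) : ZMod n) * _ = ((((u : ZMod n).val : ℕ) : ℤ) : ZMod n)
    rw [Int.cast_one, one_mul]
    push_cast
    rw [ZMod.natCast_val, ZMod.cast_id]
  · show ((0 : ℤ) : ZMod n) * _ = (((n : ℤ)) : ZMod n)
    push_cast
    rw [zero_mul, ZMod.natCast_self]

lemma theUnit_std (u : (ZMod n)ˣ) : theUnit n (std n u) = u :=
  Units.ext (char_unique (std n u).2.1 (theUnit_char n (std n u)) (std_char n u))

lemma move_rel {p : SS n} {q : (ℤ × ℤ) × (ℤ × ℤ)}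
    (hq : Primitive q.1 ∧ Primitive q.2 ∧ ω q.1 q.2 = (n : ℤ))
    (h : Move (n : ℤ) p.1 q) :
    (negInvSetoid n).r (theUnit n p) (theUnit n ⟨q, hq⟩) := by
  cases h with
  | sl2 A pp =>
    left
    apply Units.ext
    exact char_unique hq.1 (theUnit_char n ⟨_, hq⟩) (char_sl2 A (theUnit_char n p))
  | braid pp =>
    right
    apply Units.ext
    exact char_unique hq.1 (theUnit_char n ⟨_, hq⟩) (char_braid (theUnit_char n p))

lemma norm_equiv (p : SS n) (u : (ZMod n)ˣ) (hu : χ n p.1 (u : ZMod n)) :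
    Relation.EqvGen (RR n) p (std n u) := by
  obtain ⟨⟨c1, c2⟩, hcond⟩ := p
  obtain ⟨h1, h2, hω⟩ := hcond
  obtain ⟨s, t, hst⟩ := id h1
  set A := mkSL s t (-c1.2) c1.1 (by linear_combination hst) with hA
  have hA1 : SL2act A c1 = (1, 0) := by
    rw [hA, mkSL_act]
    exact Prod.ext (by linear_combination hst) (by ring)
  have hA2 : SL2act A c2 = (s * c2.1 + t * c2.2, (n : ℤ)) := by
    rw [hA, mkSL_act]
    refine Prod.ext rfl ?_
    simp only [ω] at hω
    show -c1.2 * c2.1 + c1.1 * c2.2 = (n : ℤ)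
    linear_combination hω
  set E := s * c2.1 + t * c2.2 with hE
  have hpair : (SL2act A c1, SL2act A c2) = ((1, 0), (E, (n : ℤ))) := by
    rw [hA1, hA2]
  have hq1 : Primitive ((1,0) : ℤ×ℤ) ∧ Primitive ((E, (n:ℤ)) : ℤ×ℤ) ∧
      ω (1,0) (E, (n:ℤ)) = (n : ℤ) := by
    have := move_mem ⟨h1, h2, hω⟩ (Move.sl2 A (c1, c2))
    rwa [show (SL2act A (c1, c2).1, SL2act A (c1, c2).2) = (((1,0) : ℤ×ℤ), ((E, (n:ℤ)) : ℤ×ℤ))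
      from hpair] at this
  have hmove1 : Move (n:ℤ) (c1, c2) ((1,0), (E, (n:ℤ))) := by
    have := Move.sl2 (n := (n:ℤ)) A (c1, c2)
    rwa [show (SL2act A (c1, c2).1, SL2act A (c1, c2).2) = (((1,0) : ℤ×ℤ), ((E, (n:ℤ)) : ℤ×ℤ))
      from hpair] at this
  have hq1u : χ n (((1,0) : ℤ×ℤ), ((E, (n:ℤ)) : ℤ×ℤ)) (u : ZMod n) := by
    have := char_sl2 (n := n) A (p := (c1, c2)) hu
    rwa [hpair] at this
  -- E is congruent to the canonical lift of u
  have hEu : ((E : ℤ) : ZMod n) = (u : ZMod n) := by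
    have := hq1u.1
    rw [Int.cast_one, one_mul] at this
    exact this.symm
  have hxu : (((((u : ZMod n).val : ℕ) : ℤ)) : ZMod n) = (u : ZMod n) := by
    push_cast
    rw [ZMod.natCast_val, ZMod.cast_id]
  have hdvd : ((n : ℕ) : ℤ) ∣ (E - (((u : ZMod n).val : ℕ) : ℤ)) := by
    rw [← ZMod.intCast_zmod_eq_zero_iff_dvd]
    push_cast
    rw [sub_eq_zero, hEu]
    push_cast at hxu
    exact hxu.symm
  obtain ⟨k, hk⟩ := hdvd
  set B := mkSL 1 (-k) 0 1 (by ring) with hB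
  have hB2 : (SL2act B ((1,0) : ℤ×ℤ), SL2act B ((E, (n:ℤ)) : ℤ×ℤ))
      = ((((1:ℤ),(0:ℤ)) : ℤ×ℤ), (((((u : ZMod n).val : ℕ) : ℤ), (n:ℤ)) : ℤ×ℤ)) := by
    rw [hB, mkSL_act, mkSL_act]
    refine Prod.ext (Prod.ext (by ring) (by ring)) (Prod.ext ?_ (by ring))
    show 1 * E + -k * (n : ℤ) = (((u : ZMod n).val : ℕ) : ℤ)
    linear_combination hk
  have hmove2 : Move (n:ℤ) (((1,0) : ℤ×ℤ), ((E, (n:ℤ)) : ℤ×ℤ)) (std n u).1 := by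
    have h := Move.sl2 (n := (n:ℤ)) B (((1,0) : ℤ×ℤ), ((E, (n:ℤ)) : ℤ×ℤ))
    rw [show (SL2act B (((1,0) : ℤ×ℤ), ((E, (n:ℤ)) : ℤ×ℤ)).1,
      SL2act B (((1,0) : ℤ×ℤ), ((E, (n:ℤ)) : ℤ×ℤ)).2)
      = ((((1:ℤ),(0:ℤ)) : ℤ×ℤ), (((((u : ZMod n).val : ℕ) : ℤ), (n:ℤ)) : ℤ×ℤ)) from hB2] at h
    exact h
  refine Relation.EqvGen.trans _ (⟨((1,0), (E, (n:ℤ))), hq1⟩ : SS n) _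
    (Relation.EqvGen.rel _ _ hmove1) (Relation.EqvGen.rel _ _ hmove2)

lemma std_braid (u : (ZMod n)ˣ) :
    Relation.EqvGen (RR n) (std n u) (std n (-u⁻¹)) := by
  set p := std n u with hp
  have hq := move_mem p.2 (Move.braid p.1)
  have hχ : χ n (-(p.1.2 + (n:ℤ) • p.1.1), p.1.1) ((-u⁻¹ : (ZMod n)ˣ) : ZMod n) :=
    char_braid (std_char n u)
  refine Relation.EqvGen.trans _ (⟨(-(p.1.2 + (n:ℤ) • p.1.1), p.1.1), hq⟩ : SS n) _
    (Relation.EqvGen.rel _ _ (Move.braid p.1)) (norm_equiv n _ _ hχ)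

lemma theUnit_eqvGen {p q : SS n} (h : Relation.EqvGen (RR n) p q) :
    Quotient.mk (negInvSetoid n) (theUnit n p) = Quotient.mk (negInvSetoid n) (theUnit n q) := by
  induction h with
  | rel a b hab => exact Quotient.sound (move_rel n b.2 hab)
  | refl a => rfl
  | symm a b _ ih => exact ih.symm
  | trans a b c _ _ ih1 ih2 => exact ih1.trans ih2

noncomputable def classEquiv :
    Quotient (Relation.EqvGen.setoid (RR n)) ≃ Quotient (negInvSetoid n) where
  toFun := Quotient.lift (fun p => Quotient.mk (negInvSetoid n) (theUnit n p)) (by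
    intro p q h
    exact theUnit_eqvGen n h)
  invFun := Quotient.lift (fun u => Quotient.mk (Relation.EqvGen.setoid (RR n)) (std n u)) (by
    intro u v h
    rcases h with rfl | rfl
    · rfl
    · exact Quotient.sound (std_braid n u))
  left_inv := by
    intro q
    induction q using Quotient.inductionOn with
    | h p =>
      exact Quotient.sound (Relation.EqvGen.symm _ _
        (norm_equiv n p (theUnit n p) (theUnit_char n p)))
  right_inv := by
    intro q
    induction q using Quotient.inductionOn with
    | h u => exact congrArg (Quotient.mk (negInvSetoid n)) (theUnit_std n u)

end Main

theorem count_equivalence_classes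
    (n : ℕ) (hn : 0 < n)
    (N : ℕ)
    (hN : N = Nat.card (Quotient (Relation.EqvGen.setoid
      (fun p q : {p : (ℤ × ℤ) × (ℤ × ℤ) //
        Primitive p.1 ∧ Primitive p.2 ∧ ω p.1 p.2 = (n : ℤ)} => Move (n : ℤ) p.1 q.1)))) :
    (2 * N : ℤ) = (Nat.totient n : ℤ) +
      (if 4 ∣ n then 0 else 1) *
        ∏ p ∈ n.primeFactors.erase 2, (1 + (-1 : ℤ) ^ ((p - 1) / 2)) := by
  haveI : NeZero n := ⟨hn.ne'⟩
  have hcard : N = Nat.card (Quotient (negInvSetoid n)) := by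
    rw [hN]
    exact Nat.card_congr (classEquiv n)
  have h2 : 2 * N = n.totient + sqneg n := by
    rw [hcard]
    exact two_mul_card_quot n
  have h3 := sqneg_eq n hn
  calc (2 * N : ℤ) = ((2 * N : ℕ) : ℤ) := by push_cast; ring
    _ = (n.totient : ℤ) + (sqneg n : ℤ) := by exact_mod_cast congrArg (Nat.cast (R := ℤ)) h2
    _ = _ := by rw [h3]
end

section
/- Let n be a positive integer. Consider the equivalence relation on the group (ℤ/nℤ)ˣ of units identifying each unit k with −k⁻¹ (this is an equivalence relation since k ↦ −k⁻¹ is an involution). Then the number N of equivalence classes satisfies 2·N = φ(n) + ψ(n)·∏_{p odd prime, p ∣ n} (1 + (−1)^{(p−1)/2}). -/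
open Finset

/-- number of square roots of -1 among units -/
noncomputable def sqCard (n : ℕ) : ℕ := Nat.card {x : (ZMod n)ˣ // x * x = -1}

lemma key {n : ℕ} (a b : (ZMod n)ˣ) :
    Relation.EqvGen (fun a b : (ZMod n)ˣ => b = -a⁻¹) a b ↔ (b = a ∨ b = -a⁻¹) := by
  have invol : ∀ x : (ZMod n)ˣ, -(-x⁻¹)⁻¹ = x := fun x => by simp
  constructor
  · intro h
    induction h with
    | rel x y h => exact Or.inr h
    | refl x => exact Or.inl rfl
    | symm x y _ ih =>
        rcases ih with rfl | rfl
        · exact Or.inl rfl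
        · exact Or.inr (invol x).symm
    | trans x y z _ _ ih1 ih2 =>
        rcases ih1 with rfl | rfl <;> rcases ih2 with rfl | rfl
        · exact Or.inl rfl
        · exact Or.inr rfl
        · exact Or.inr rfl
        · exact Or.inl (invol x)
  · rintro (rfl | rfl)
    · exact Relation.EqvGen.refl _
    · exact Relation.EqvGen.rel _ _ rfl

lemma fix_iff {n : ℕ} (a : (ZMod n)ˣ) : a = -a⁻¹ ↔ a * a = -1 := by
  constructor
  · intro h
    nth_rewrite 1 [h]
    simp
  · intro h
    have := congrArg (fun y => y * a⁻¹) h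
    simpa [mul_assoc] using this

lemma two_mul_card (n : ℕ) [NeZero n] :
    2 * Nat.card (Quotient (Relation.EqvGen.setoid
      (fun a b : (ZMod n)ˣ => b = -a⁻¹))) = Nat.totient n + sqCard n := by
  classical
  set r := fun a b : (ZMod n)ˣ => b = -a⁻¹ with hr
  letI s : Setoid (ZMod n)ˣ := Relation.EqvGen.setoid r
  have hs : ∀ a b : (ZMod n)ˣ, (a ≈ b) ↔ (b = a ∨ b = -a⁻¹) := fun a b => key a b
  letI : DecidableRel s.r := fun a b => decidable_of_iff _ (hs a b).symm
  haveI : Fintype (Quotient s) := Quotient.fintype s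
  have invol : ∀ x : (ZMod n)ˣ, -(-x⁻¹)⁻¹ = x := fun x => by simp
  -- rewrite Nat.card as Fintype.card
  rw [Nat.card_eq_fintype_card]
  have hF : sqCard n = (univ.filter (fun a : (ZMod n)ˣ => a * a = -1)).card := by
    rw [sqCard, Nat.card_eq_fintype_card, Fintype.card_subtype]
  have hT : Nat.totient n = Fintype.card (ZMod n)ˣ := (ZMod.card_units_eq_totient n).symm
  have hL : 2 * Fintype.card (Quotient s) = ∑ _c : Quotient s, 2 := by
    rw [Finset.sum_const, smul_eq_mul, Finset.card_univ, mul_comm]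
  rw [hF, hT, Finset.card_filter, hL, Fintype.card_eq_sum_ones, ← Finset.sum_add_distrib]
  rw [← Finset.sum_fiberwise_of_maps_to (g := fun a : (ZMod n)ˣ => (⟦a⟧ : Quotient s))
    (fun x _ => Finset.mem_univ _)]
  apply Finset.sum_congr rfl
  intro c _
  induction c using Quotient.inductionOn with
  | h x =>
    have hfib : univ.filter (fun a : (ZMod n)ˣ => (⟦a⟧ : Quotient s) = ⟦x⟧) = {x, -x⁻¹} := by
      ext a
      simp only [Finset.mem_filter, Finset.mem_univ, true_and, Finset.mem_insert,
        Finset.mem_singleton, Quotient.eq]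
      have hax := hs a x
      constructor
      · intro h
        rcases hax.mp h with rfl | h2
        · exact Or.inl rfl
        · rw [h2]; exact Or.inr (invol a).symm
      · rintro (rfl | rfl)
        · exact hax.mpr (Or.inl rfl)
        · exact hax.mpr (Or.inr (invol x).symm)
    rw [hfib]
    by_cases hx : x = -x⁻¹
    · have hpair : ({x, -x⁻¹} : Finset (ZMod n)ˣ) = {x} := by rw [← hx]; simp
      rw [hpair, Finset.sum_singleton, if_pos ((fix_iff x).mp hx)]
    · have hne : x ≠ -x⁻¹ := hx
      rw [Finset.sum_pair hne, if_neg (fun h => hx ((fix_iff x).mpr h)),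
        if_neg (fun h => hx (((fix_iff (-x⁻¹)).mpr h).trans (invol x)).symm)]
      omega


lemma sqCard_one : sqCard 1 = 1 := by
  haveI : Subsingleton (ZMod 1)ˣ := ⟨fun a b => Units.ext (Subsingleton.elim _ _)⟩
  haveI : Unique {x : (ZMod 1)ˣ // x * x = -1} :=
    { default := ⟨1, Units.ext (Subsingleton.elim _ _)⟩
      uniq := fun y => Subtype.ext (Units.ext (Subsingleton.elim _ _)) }
  rw [sqCard, Nat.card_unique]

lemma sqCard_two : sqCard 2 = 1 := by
  haveI : Subsingleton (ZMod 2)ˣ := by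
    apply Fintype.card_le_one_iff_subsingleton.mp
    decide
  haveI : Unique {x : (ZMod 2)ˣ // x * x = -1} :=
    { default := ⟨1, Subsingleton.elim _ _⟩
      uniq := fun y => Subtype.ext (Subsingleton.elim _ _) }
  rw [sqCard, Nat.card_unique]

lemma sqCard_mul {m n : ℕ} (h : m.Coprime n) : sqCard (m * n) = sqCard m * sqCard n := by
  let e : (ZMod (m*n))ˣ ≃* (ZMod m)ˣ × (ZMod n)ˣ :=
    (Units.mapEquiv (ZMod.chineseRemainder h).toMulEquiv).trans MulEquiv.prodUnits
  have he : e (-1) = -1 := by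
    refine Prod.ext (Units.ext ?_) (Units.ext ?_) <;>
      simp [e, MulEquiv.prodUnits, Units.mapEquiv]
  have equiv1 : {x : (ZMod (m*n))ˣ // x*x = -1} ≃
      {y : (ZMod m)ˣ × (ZMod n)ˣ // y*y = -1} :=
    e.toEquiv.subtypeEquiv (fun x => by
      rw [show e.toEquiv x = e x from rfl, ← map_mul]
      constructor
      · intro hx; rw [hx, he]
      · intro hx; exact e.injective (by rw [hx, he]))
  have equiv2 : {y : (ZMod m)ˣ × (ZMod n)ˣ // y*y = -1} ≃
      {a : (ZMod m)ˣ // a*a = -1} × {b : (ZMod n)ˣ // b*b = -1} := by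
    refine (Equiv.subtypeEquivRight ?_).trans (Equiv.subtypeProdEquivProd)
    intro y
    constructor
    · intro hy
      exact ⟨congrArg Prod.fst hy, congrArg Prod.snd hy⟩
    · intro hy
      exact Prod.ext hy.1 hy.2
  rw [sqCard, Nat.card_congr (equiv1.trans equiv2), Nat.card_prod, sqCard, sqCard]


-- units with square one in odd prime power modulus
lemma units_sq_eq_one {p : ℕ} (hp : p.Prime) (hp2 : p ≠ 2) {e : ℕ} (he : 0 < e)
    (u : (ZMod (p^e))ˣ) (h : u * u = 1) : u = 1 ∨ u = -1 := by
  haveI : NeZero (p^e) := ⟨pow_ne_zero e hp.pos.ne'⟩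
  set x : ZMod (p^e) := (u : ZMod (p^e)) with hxdef
  have hx : x * x = 1 := by
    have := congrArg (Units.val) h
    simpa using this
  set a : ℤ := ((x.val : ℕ) : ℤ) with hadef
  have hax : ((a : ℤ) : ZMod (p^e)) = x := by
    rw [hadef, Int.cast_natCast]
    exact ZMod.natCast_rightInverse x
  have hdvd : ((p:ℤ))^e ∣ (a - 1) * (a + 1) := by
    have h0 : (((a*a - 1 : ℤ)) : ZMod (p^e)) = 0 := by
      push_cast [hax]
      rw [hx]; ring
    have := (ZMod.intCast_zmod_eq_zero_iff_dvd _ _).mp h0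
    have h2 : (a - 1) * (a + 1) = a * a - 1 := by ring
    rw [h2]
    exact_mod_cast this
  have hpprime : Prime (p : ℤ) := Nat.prime_iff_prime_int.mp hp
  by_cases hd : (p:ℤ) ∣ a + 1
  · -- then p does not divide a - 1
    have hnd : ¬ (p:ℤ) ∣ a - 1 := by
      intro hd2
      have h2 : (p:ℤ) ∣ 2 := by
        have := dvd_sub hd hd2
        simpa using this
      have : (p:ℕ) ∣ 2 := by exact_mod_cast h2
      exact hp2 ((Nat.prime_dvd_prime_iff_eq hp Nat.prime_two).mp this)
    have hcop : IsCoprime ((p:ℤ)^e) (a - 1) :=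
      IsCoprime.pow_left ((hpprime.coprime_iff_not_dvd).mpr hnd)
    have : ((p:ℤ))^e ∣ a + 1 := hcop.dvd_of_dvd_mul_left hdvd
    right
    apply Units.ext
    have : ((a + 1 : ℤ) : ZMod (p^e)) = 0 := by
      rw [ZMod.intCast_zmod_eq_zero_iff_dvd]
      exact_mod_cast this
    have hx1 : x = -1 := by
      have := this
      push_cast [hax] at this
      linear_combination this
    simpa [hxdef] using hx1
  · have hcop : IsCoprime ((p:ℤ)^e) (a + 1) :=
      IsCoprime.pow_left ((hpprime.coprime_iff_not_dvd).mpr hd)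
    have : ((p:ℤ))^e ∣ a - 1 := hcop.dvd_of_dvd_mul_right hdvd
    left
    apply Units.ext
    have : ((a - 1 : ℤ) : ZMod (p^e)) = 0 := by
      rw [ZMod.intCast_zmod_eq_zero_iff_dvd]
      exact_mod_cast this
    have hx1 : x = 1 := by
      push_cast [hax] at this
      linear_combination this
    simpa [hxdef] using hx1

lemma card_units_sq_one {p : ℕ} (hp : p.Prime) (hp2 : p ≠ 2) {e : ℕ} (he : 0 < e) :
    Nat.card {x : (ZMod (p^e))ˣ // x * x = 1} = 2 := by
  haveI : Fact (2 < p^e) := ⟨lt_of_lt_of_le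
    (by have := hp.two_le; omega) (Nat.le_self_pow he.ne' p)⟩
  rw [Nat.card_eq_two_iff]
  have hne : (1 : (ZMod (p^e))ˣ) ≠ -1 := by
    intro hcontra
    have := congrArg (Units.val) hcontra
    simp only [Units.val_one, Units.val_neg] at this
    exact ZMod.neg_one_ne_one this.symm
  refine ⟨⟨1, by simp⟩, ⟨-1, by simp⟩, ?_, ?_⟩
  · intro hcontra
    exact hne (congrArg Subtype.val hcontra)
  · apply Set.eq_univ_iff_forall.mpr
    rintro ⟨u, hu⟩
    rcases units_sq_eq_one hp hp2 he u hu with rfl | rfl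
    · exact Or.inl rfl
    · exact Or.inr rfl

lemma sqCard_pp_one_mod_four {p : ℕ} (hp : p.Prime) (hp4 : p % 4 = 1) {e : ℕ} (he : 0 < e) :
    sqCard (p^e) = 2 := by
  haveI : Fact p.Prime := ⟨hp⟩
  have hp2 : p ≠ 2 := by omega
  -- find a square root of -1 mod p^e
  obtain ⟨y, hy⟩ := ZMod.exists_sq_eq_neg_one_iff.mpr (by omega : p % 4 ≠ 3)
  haveI : NeZero p := ⟨hp.pos.ne'⟩
  set b : ℤ := ((y.val : ℕ) : ℤ) with hbdef
  have hby : ((b : ℤ) : ZMod p) = y := by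
    rw [hbdef, Int.cast_natCast]
    exact ZMod.natCast_rightInverse y
  have h1 : (p : ℤ) ∣ b * b - (-1) := by
    rw [← ZMod.intCast_zmod_eq_zero_iff_dvd]
    push_cast [hby]
    rw [← hy]; ring
  have h2 := dvd_sub_pow_of_dvd_sub (R := ℤ) h1 (e - 1)
  rw [Nat.sub_add_cancel he] at h2
  have hodd : Odd (p ^ (e-1)) := (hp.odd_of_ne_two hp2).pow
  rw [hodd.neg_one_pow] at h2
  set c : ZMod (p^e) := (((b ^ (p^(e-1)) : ℤ)) : ZMod (p^e)) with hcdef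
  have hc : c * c = -1 := by
    rw [hcdef]
    have h0 : (((b ^ (p^(e-1)) * b ^ (p^(e-1)) + 1 : ℤ)) : ZMod (p^e)) = 0 := by
      rw [ZMod.intCast_zmod_eq_zero_iff_dvd]
      have : (b*b) ^ p^(e-1) - (-1) = b ^ (p^(e-1)) * b ^ (p^(e-1)) + 1 := by
        rw [mul_pow]; ring
      rw [← this]
      exact_mod_cast h2
    push_cast at h0 ⊢
    linear_combination h0
  -- the unit x₀
  let x₀ : (ZMod (p^e))ˣ := ⟨c, -c, by rw [mul_neg, hc, neg_neg], by rw [neg_mul, hc, neg_neg]⟩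
  have hx₀ : x₀ * x₀ = -1 := by
    apply Units.ext
    simpa [x₀] using hc
  -- bijection with square roots of 1
  have hequiv : {x : (ZMod (p^e))ˣ // x * x = 1} ≃ {x : (ZMod (p^e))ˣ // x * x = -1} :=
    { toFun := fun z => ⟨x₀ * z, by
        rw [mul_mul_mul_comm, hx₀, z.2]; norm_num⟩
      invFun := fun w => ⟨x₀⁻¹ * w, by
        rw [mul_mul_mul_comm, ← mul_inv, hx₀, w.2]
        simp⟩
      left_inv := fun z => Subtype.ext (by simp)
      right_inv := fun w => Subtype.ext (by simp) }
  rw [sqCard, ← Nat.card_congr hequiv, card_units_sq_one hp hp2 he]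

lemma sqCard_pp_three_mod_four {p : ℕ} (hp : p.Prime) (hp4 : p % 4 = 3) {e : ℕ} (he : 0 < e) :
    sqCard (p^e) = 0 := by
  haveI : Fact p.Prime := ⟨hp⟩
  haveI : IsEmpty {x : (ZMod (p^e))ˣ // x * x = -1} := by
    constructor
    rintro ⟨x, hx⟩
    set φ := ZMod.castHom (dvd_pow_self p he.ne') (ZMod p)
    set y : (ZMod p)ˣ := Units.map (φ : ZMod (p^e) →* ZMod p) x with hydef
    have hy : (y : ZMod p) * (y : ZMod p) = -1 := by
      have := congrArg (Units.val) (congrArg (Units.map (φ : ZMod (p^e) →* ZMod p)) hx)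
      simpa [hydef] using this
    have : IsSquare (-1 : ZMod p) := ⟨y, hy.symm⟩
    exact (ZMod.exists_sq_eq_neg_one_iff.mp this) hp4
  rw [sqCard, Nat.card_of_isEmpty]

lemma sqCard_two_pow {e : ℕ} (he : 2 ≤ e) : sqCard (2^e) = 0 := by
  haveI : IsEmpty {x : (ZMod (2^e))ˣ // x * x = -1} := by
    constructor
    rintro ⟨x, hx⟩
    set φ := ZMod.castHom (pow_dvd_pow 2 he) (ZMod (2^2))
    set y : (ZMod (2^2))ˣ := Units.map (φ : ZMod (2^e) →* ZMod (2^2)) x with hydef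
    have hy : (y : ZMod (2^2)) * (y : ZMod (2^2)) = -1 := by
      have := congrArg (Units.val) (congrArg (Units.map (φ : ZMod (2^e) →* ZMod (2^2))) hx)
      simpa [hydef] using this
    have : ∀ z : ZMod (2^2), z * z ≠ -1 := by decide
    exact this _ hy
  rw [sqCard, Nat.card_of_isEmpty]

lemma sqCard_odd_pp {p : ℕ} (hp : p.Prime) (hp2 : p ≠ 2) {e : ℕ} (he : 0 < e) :
    (sqCard (p^e) : ℤ) = 1 + (-1 : ℤ) ^ ((p - 1) / 2) := by
  have hodd : p % 2 = 1 := Nat.odd_iff.mp (hp.odd_of_ne_two hp2)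
  rcases (by omega : p % 4 = 1 ∨ p % 4 = 3) with h4 | h4
  · rw [sqCard_pp_one_mod_four hp h4 he]
    have hh : (p - 1) / 2 = 2 * ((p-1)/4) := by omega
    rw [hh, pow_mul]
    norm_num
  · rw [sqCard_pp_three_mod_four hp h4 he]
    have hh : (p - 1) / 2 = 2 * ((p-1)/4) + 1 := by omega
    rw [hh, pow_succ, pow_mul]
    norm_num

lemma sqCard_formula {n : ℕ} (hn : n ≠ 0) :
    (sqCard n : ℤ) = (if 4 ∣ n then 0 else 1) *
      ∏ p ∈ n.primeFactors.erase 2, (1 + (-1 : ℤ) ^ ((p - 1) / 2)) := by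
  have hmf := Nat.multiplicative_factorization (fun m => (sqCard m : ℤ))
    (fun x y h => by
      show ((sqCard (x*y) : ℤ)) = (sqCard x : ℤ) * (sqCard y : ℤ)
      rw [sqCard_mul h]; push_cast; ring)
    (by show ((sqCard 1 : ℤ)) = 1; rw [sqCard_one]; norm_num) hn
  have hmf' : (sqCard n : ℤ) = n.factorization.prod fun p k => (sqCard (p^k) : ℤ) := hmf
  rw [hmf', Finsupp.prod, Nat.support_factorization]
  have hterm : ∀ p ∈ n.primeFactors.erase 2,
      (sqCard (p ^ n.factorization p) : ℤ) = 1 + (-1 : ℤ) ^ ((p - 1) / 2) := by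
    intro p hp
    have hp2 := Finset.ne_of_mem_erase hp
    have hpmem := Finset.mem_of_mem_erase hp
    have hpp := Nat.prime_of_mem_primeFactors hpmem
    have hpos : 0 < n.factorization p :=
      hpp.factorization_pos_of_dvd hn (Nat.dvd_of_mem_primeFactors hpmem)
    exact sqCard_odd_pp hpp hp2 hpos
  by_cases h2 : 2 ∈ n.primeFactors
  · rw [← Finset.prod_erase_mul _ _ h2, Finset.prod_congr rfl hterm, mul_comm]
    congr 1
    have hk : 0 < n.factorization 2 :=
      Nat.prime_two.factorization_pos_of_dvd hn (Nat.dvd_of_mem_primeFactors h2)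
    have h4 : 4 ∣ n ↔ 2 ≤ n.factorization 2 := by
      have := Nat.Prime.pow_dvd_iff_le_factorization (k := 2) Nat.prime_two hn
      simpa [show (2:ℕ)^2 = 4 by norm_num] using this
    by_cases h4d : 4 ∣ n
    · rw [if_pos h4d, sqCard_two_pow (h4.mp h4d)]
      norm_num
    · rw [if_neg h4d]
      have h1 : n.factorization 2 = 1 := by
        have := h4.not.mp h4d
        omega
      rw [h1, pow_one, sqCard_two]
      norm_num
  · have herase : n.primeFactors.erase 2 = n.primeFactors := Finset.erase_eq_of_notMem h2
    have h4d : ¬ 4 ∣ n := fun h =>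
      h2 (Nat.mem_primeFactors.mpr ⟨Nat.prime_two, dvd_trans ⟨2, rfl⟩ h, hn⟩)
    rw [if_neg h4d, one_mul]
    conv_lhs => rw [← herase]
    exact Finset.prod_congr rfl hterm

theorem count_units_mod_involution
    (n : ℕ) (hn : 0 < n)
    (N : ℕ)
    (hN : N = Nat.card (Quotient (Relation.EqvGen.setoid
      (fun a b : (ZMod n)ˣ => b = -a⁻¹)))) :
    (2 * N : ℤ) = (Nat.totient n : ℤ) +
      (if 4 ∣ n then 0 else 1) *
        ∏ p ∈ n.primeFactors.erase 2, (1 + (-1 : ℤ) ^ ((p - 1) / 2)) := by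
  haveI : NeZero n := ⟨hn.ne'⟩
  have h1 := two_mul_card n
  rw [hN] at *
  rw [← sqCard_formula hn.ne']
  exact_mod_cast congrArg (fun k : ℕ => (k : ℤ)) h1
end
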